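/- arXiv:2104.08816 — 7 statements merged into one kernel-verified Lean document; each statement's English description precedes it below -/
import Mathlib

section
/- Let (A,[·,·,·],ρ,φ) be a 3-Hom-ρ-Lie algebra. Take V = A, β = φ, and define ad : A × A → End_G(A) by ad(f₁,f₂)(f₃) = [f₁,f₂,f₃]. Then (A, ad) is a representation of A with respect to β = φ (the adjoint representation); in particular ad satisfies conditions (R1)–(R4). -/
/-- A multiplicative-free `G`-graded `3`-Hom-`ρ`-Lie algebra over the field `k`:
a `G`-graded vector space `A = ⊕ₐ Aₐ` with an (internal) grading, a trilinear
bracket which is degree-additive and `ρ`-skew-symmetric on homogeneous elements,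
and an even linear map `φ` satisfying the `ρ`-fundamental identity. -/
structure ThreeHomRhoLie (k G A : Type*) [Field k] [AddCommGroup G] [DecidableEq G]
    [AddCommGroup A] [Module k A] (ρ : G → G → k) where
  grading : G → Submodule k A
  isInternal : DirectSum.IsInternal grading
  br : A →ₗ[k] A →ₗ[k] A →ₗ[k] A
  φ : A →ₗ[k] A
  φ_even : ∀ a : G, ∀ f ∈ grading a, φ f ∈ grading a
  br_deg : ∀ (a b c : G), ∀ f ∈ grading a, ∀ g ∈ grading b, ∀ h ∈ grading c,
    br f g h ∈ grading (a + b + c)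
  skew₁₂ : ∀ (a b : G), ∀ f ∈ grading a, ∀ g ∈ grading b, ∀ h : A,
    br f g h = (-(ρ a b)) • br g f h
  skew₂₃ : ∀ (b c : G), ∀ g ∈ grading b, ∀ h ∈ grading c, ∀ f : A,
    br f g h = (-(ρ b c)) • br f h g
  fund : ∀ (a₁ a₂ b₁ b₂ b₃ : G), ∀ f₁ ∈ grading a₁, ∀ f₂ ∈ grading a₂,
    ∀ g₁ ∈ grading b₁, ∀ g₂ ∈ grading b₂, ∀ g₃ ∈ grading b₃,
    br (φ f₁) (φ f₂) (br g₁ g₂ g₃) =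
      br (br f₁ f₂ g₁) (φ g₂) (φ g₃)
        + ρ (a₁ + a₂) b₁ • br (φ g₁) (br f₁ f₂ g₂) (φ g₃)
        + ρ (a₁ + a₂) (b₁ + b₂) • br (φ g₁) (φ g₂) (br f₁ f₂ g₃)

/-- A representation `(V, μ, β)` of a `3`-Hom-`ρ`-Lie algebra `L` on a `G`-graded
vector space `V` (grading `𝒱`) with respect to the even endomorphism `β`:
conditions (R1)–(R4), stated on homogeneous elements. -/
structure IsRhoRep {k G A : Type*} [Field k] [AddCommGroup G] [DecidableEq G]
    [AddCommGroup A] [Module k A] {ρ : G → G → k} (L : ThreeHomRhoLie k G A ρ)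
    {V : Type*} [AddCommGroup V] [Module k V]
    (𝒱 : G → Submodule k V) (β : V →ₗ[k] V)
    (μ : A →ₗ[k] A →ₗ[k] Module.End k V) : Prop where
  β_even : ∀ a : G, ∀ v ∈ 𝒱 a, β v ∈ 𝒱 a
  μ_deg : ∀ (a b c : G), ∀ f ∈ L.grading a, ∀ g ∈ L.grading b, ∀ v ∈ 𝒱 c,
    μ f g v ∈ 𝒱 (a + b + c)
  μ_skew : ∀ (a b c : G), ∀ f ∈ L.grading a, ∀ g ∈ L.grading b, ∀ v ∈ 𝒱 c,
    μ f g v = (-(ρ a b)) • μ g f v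
  rep₁ : ∀ (a₁ a₂ b₁ b₂ c : G), ∀ f₁ ∈ L.grading a₁, ∀ f₂ ∈ L.grading a₂,
    ∀ g₁ ∈ L.grading b₁, ∀ g₂ ∈ L.grading b₂, ∀ v ∈ 𝒱 c,
    μ (L.br f₁ f₂ g₁) (L.φ g₂) (β v)
        + ρ (a₁ + a₂) b₁ • μ (L.φ g₁) (L.br f₁ f₂ g₂) (β v) =
      μ (L.φ f₁) (L.φ f₂) (μ g₁ g₂ v)
        - ρ (a₁ + a₂) (b₁ + b₂) • μ (L.φ g₁) (L.φ g₂) (μ f₁ f₂ v)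
  rep₂ : ∀ (b₁ b₂ b₃ c d : G), ∀ g₁ ∈ L.grading b₁, ∀ g₂ ∈ L.grading b₂,
    ∀ g₃ ∈ L.grading b₃, ∀ f ∈ L.grading c, ∀ v ∈ 𝒱 d,
    μ (L.br g₁ g₂ g₃) (L.φ f) (β v) =
      μ (L.φ g₁) (L.φ g₂) (μ g₃ f v)
        + ρ b₁ (b₂ + b₃) • μ (L.φ g₂) (L.φ g₃) (μ g₁ f v)
        + ρ (b₁ + b₂) b₃ • μ (L.φ g₃) (L.φ g₁) (μ g₂ f v)
  rep₃ : ∀ (c a₁ a₂ a₃ d : G), ∀ g ∈ L.grading c, ∀ f₁ ∈ L.grading a₁,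
    ∀ f₂ ∈ L.grading a₂, ∀ f₃ ∈ L.grading a₃, ∀ v ∈ 𝒱 d,
    μ (L.φ g) (L.br f₁ f₂ f₃) (β v) =
      ρ c (a₁ + a₂) • μ (L.φ f₁) (L.φ f₂) (μ g f₃ v)
        + (ρ c (a₂ + a₃) * ρ a₁ (a₂ + a₃)) • μ (L.φ f₂) (L.φ f₃) (μ g f₁ v)
        + (ρ c (a₁ + a₃) * ρ (a₁ + a₂) a₃) • μ (L.φ f₃) (L.φ f₁) (μ g f₂ v)
  rep₄ : ∀ (a₁ a₂ b₁ b₂ c : G), ∀ f₁ ∈ L.grading a₁, ∀ f₂ ∈ L.grading a₂,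
    ∀ g₁ ∈ L.grading b₁, ∀ g₂ ∈ L.grading b₂, ∀ v ∈ 𝒱 c,
    μ (L.φ f₁) (L.φ f₂) (μ g₁ g₂ v) =
      ρ (a₁ + a₂) (b₁ + b₂) • μ (L.φ g₁) (L.φ g₂) (μ f₁ f₂ v)
        + ρ (a₁ + a₂) b₁ • μ (L.φ g₁) (L.br f₁ f₂ g₂) (β v)
        + μ (L.br f₁ f₂ g₁) (L.φ g₂) (β v)

/-- Cyclic rotation to the left: `[x,y,z] = ρ(a,b)ρ(a,c) • [y,z,x]`. -/
lemma ThreeHomRhoLie.rotL {k G A : Type*} [Field k] [AddCommGroup G] [DecidableEq G]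
    [AddCommGroup A] [Module k A] {ρ : G → G → k} (L : ThreeHomRhoLie k G A ρ)
    (a b c : G) (x : A) (hx : x ∈ L.grading a) (y : A) (hy : y ∈ L.grading b)
    (z : A) (hz : z ∈ L.grading c) :
    L.br x y z = (ρ a b * ρ a c) • L.br y z x := by
  rw [L.skew₁₂ a b x hx y hy z, L.skew₂₃ a c x hx z hz y, smul_smul]
  congr 1; ring

/-- Cyclic rotation to the right: `[x,y,z] = ρ(b,c)ρ(a,c) • [z,x,y]`. -/
lemma ThreeHomRhoLie.rotR {k G A : Type*} [Field k] [AddCommGroup G] [DecidableEq G]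
    [AddCommGroup A] [Module k A] {ρ : G → G → k} (L : ThreeHomRhoLie k G A ρ)
    (a b c : G) (x : A) (hx : x ∈ L.grading a) (y : A) (hy : y ∈ L.grading b)
    (z : A) (hz : z ∈ L.grading c) :
    L.br x y z = (ρ b c * ρ a c) • L.br z x y := by
  rw [L.skew₂₃ b c y hy z hz x, L.skew₁₂ a c x hx z hz y, smul_smul]
  congr 1; ring

/-- For a `3`-Hom-`ρ`-Lie algebra `A`, the adjoint map
`ad(f₁,f₂)(f₃) = [f₁,f₂,f₃]` is a representation of `A` on itself with respect to
`β = φ` (the adjoint representation). -/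
theorem adjoint_isRep {k G A : Type*} [Field k] [AddCommGroup G] [DecidableEq G]
    [AddCommGroup A] [Module k A] (ρ : G → G → k)
    (hρ₁ : ∀ a b : G, ρ a b * ρ b a = 1)
    (hρ₂ : ∀ a b c : G, ρ (a + b) c = ρ a c * ρ b c)
    (L : ThreeHomRhoLie k G A ρ) :
    IsRhoRep L L.grading L.φ L.br := by
  have hne : ∀ a b : G, ρ a b ≠ 0 := fun a b => left_ne_zero_of_mul_eq_one (hρ₁ a b)
  have hinv : ∀ a b : G, ρ a b = (ρ b a)⁻¹ := fun a b =>
    eq_inv_of_mul_eq_one_left (hρ₁ a b)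
  have hρR : ∀ a b c : G, ρ a (b + c) = ρ a b * ρ a c := by
    intro a b c
    rw [hinv a (b + c), hρ₂, mul_inv, ← hinv, ← hinv]
  constructor
  · exact L.φ_even
  · exact fun a b c f hf g hg v hv => L.br_deg a b c f hf g hg v hv
  · exact fun a b c f hf g hg v _ => L.skew₁₂ a b f hf g hg v
  · -- rep₁
    intro a₁ a₂ b₁ b₂ c f₁ hf₁ f₂ hf₂ g₁ hg₁ g₂ hg₂ v hv
    rw [L.fund a₁ a₂ b₁ b₂ c f₁ hf₁ f₂ hf₂ g₁ hg₁ g₂ hg₂ v hv]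
    module
  · -- rep₂
    intro b₁ b₂ b₃ c d g₁ hg₁ g₂ hg₂ g₃ hg₃ f hf v hv
    have hφf := L.φ_even c f hf
    have hφv := L.φ_even d v hv
    have hφg₁ := L.φ_even b₁ g₁ hg₁
    have hφg₂ := L.φ_even b₂ g₂ hg₂
    have hφg₃ := L.φ_even b₃ g₃ hg₃
    have hB := L.br_deg b₁ b₂ b₃ g₁ hg₁ g₂ hg₂ g₃ hg₃
    have hX₁ := L.br_deg b₁ c d g₁ hg₁ f hf v hv
    have hX₂ := L.br_deg b₂ c d g₂ hg₂ f hf v hv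
    rw [L.rotL (b₁ + b₂ + b₃) c d _ hB _ hφf _ hφv,
      L.fund c d b₁ b₂ b₃ f hf v hv g₁ hg₁ g₂ hg₂ g₃ hg₃,
      L.rotR c d b₁ f hf v hv g₁ hg₁,
      L.rotR c d b₂ f hf v hv g₂ hg₂,
      L.rotR c d b₃ f hf v hv g₃ hg₃]
    simp only [map_smul, LinearMap.smul_apply]
    rw [L.rotL (b₁ + c + d) b₂ b₃ _ hX₁ _ hφg₂ _ hφg₃,
      L.rotR b₁ (b₂ + c + d) b₃ _ hφg₁ _ hX₂ _ hφg₃]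
    match_scalars <;>
    · simp only [hρ₂, hρR, hinv c b₁, hinv c b₂, hinv c b₃, hinv d b₁, hinv d b₂, hinv d b₃]
      field_simp [hne b₁ c, hne b₂ c, hne b₃ c, hne b₁ d, hne b₂ d, hne b₃ d]
  · -- rep₃
    intro c a₁ a₂ a₃ d g hg f₁ hf₁ f₂ hf₂ f₃ hf₃ v hv
    have hφv := L.φ_even d v hv
    have hφg := L.φ_even c g hg
    have hφf₁ := L.φ_even a₁ f₁ hf₁
    have hφf₂ := L.φ_even a₂ f₂ hf₂
    have hφf₃ := L.φ_even a₃ f₃ hf₃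
    have hA := L.br_deg a₁ a₂ a₃ f₁ hf₁ f₂ hf₂ f₃ hf₃
    have hX₁ := L.br_deg c a₁ d g hg f₁ hf₁ v hv
    have hX₂ := L.br_deg c a₂ d g hg f₂ hf₂ v hv
    rw [L.skew₂₃ (a₁ + a₂ + a₃) d _ hA _ hφv (L.φ g),
      L.fund c d a₁ a₂ a₃ g hg v hv f₁ hf₁ f₂ hf₂ f₃ hf₃,
      L.skew₂₃ d a₁ v hv f₁ hf₁ g, L.skew₂₃ d a₂ v hv f₂ hf₂ g,
      L.skew₂₃ d a₃ v hv f₃ hf₃ g]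
    simp only [map_smul, LinearMap.smul_apply]
    rw [L.rotL (c + a₁ + d) a₂ a₃ _ hX₁ _ hφf₂ _ hφf₃,
      L.rotR a₁ (c + a₂ + d) a₃ _ hφf₁ _ hX₂ _ hφf₃]
    match_scalars <;>
    · simp only [hρ₂, hρR, hinv a₁ d, hinv a₂ d, hinv a₃ d]
      field_simp [hne d a₁, hne d a₂, hne d a₃]
  · -- rep₄
    intro a₁ a₂ b₁ b₂ c f₁ hf₁ f₂ hf₂ g₁ hg₁ g₂ hg₂ v hv
    rw [L.fund a₁ a₂ b₁ b₂ c f₁ hf₁ f₂ hf₂ g₁ hg₁ g₂ hg₂ v hv]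
    module
end

section
/- Let (A,[·,·,·],ρ,φ) be a multiplicative 3-Hom-ρ-Lie algebra and let f₁, f₂ ∈ A be homogeneous elements with φ(f₁) = f₁ and φ(f₂) = f₂. For k ≥ 0 define ad_k(f₁,f₂) : A → A by ad_k(f₁,f₂)(g) = [f₁, f₂, φ^k(g)]. Then ad_k(f₁,f₂) is a φ^{k+1}-ρ-derivation of A of degree |f₁|+|f₂|, i.e. ad_k(f₁,f₂)∘φ = φ∘ad_k(f₁,f₂) and ad_k(f₁,f₂)[f,g,h] = [ad_k(f₁,f₂)(f), φ^{k+1}(g), φ^{k+1}(h)] + ρ(f₁+f₂,f)[φ^{k+1}(f), ad_k(f₁,f₂)(g), φ^{k+1}(h)] + ρ(f₁+f₂,f+g)[φ^{k+1}(f), φ^{k+1}(g), ad_k(f₁,f₂)(h)] for all homogeneous f,g,h ∈ A. -/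
/-- The `n`-th power `φⁿ` of the structure map `φ`. -/
def phipow {k G A : Type*} [Field k] [AddCommGroup G] [DecidableEq G]
    [AddCommGroup A] [Module k A] {ρ : G → G → k}
    (L : ThreeHomRhoLie k G A ρ) (n : ℕ) : Module.End k A :=
  (L.φ : Module.End k A) ^ n

/-- In a multiplicative `3`-Hom-`ρ`-Lie algebra, for homogeneous
`f₁, f₂` fixed by `φ`, the map `ad_m(f₁,f₂)(g) = [f₁,f₂,φᵐ g]` is a
`φ^{m+1}`-`ρ`-derivation of degree `|f₁|+|f₂|`: it commutes with `φ` and satisfies the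
`φ^{m+1}`-Leibniz rule on homogeneous elements. -/
theorem ad_k_isDerivation {k G A : Type*} [Field k] [AddCommGroup G] [DecidableEq G]
    [AddCommGroup A] [Module k A] (ρ : G → G → k)
    (hρ₁ : ∀ a b : G, ρ a b * ρ b a = 1)
    (hρ₂ : ∀ a b c : G, ρ (a + b) c = ρ a c * ρ b c)
    (L : ThreeHomRhoLie k G A ρ)
    (hmul : ∀ f g h : A, L.φ (L.br f g h) = L.br (L.φ f) (L.φ g) (L.φ h))
    (m : ℕ) (a₁ a₂ : G) (f₁ f₂ : A)
    (hf₁ : f₁ ∈ L.grading a₁) (hf₂ : f₂ ∈ L.grading a₂)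
    (hφf₁ : L.φ f₁ = f₁) (hφf₂ : L.φ f₂ = f₂) :
    (∀ g : A, L.br f₁ f₂ (phipow L m (L.φ g)) = L.φ (L.br f₁ f₂ (phipow L m g))) ∧
    (∀ (b c d : G), ∀ f ∈ L.grading b, ∀ g ∈ L.grading c, ∀ h ∈ L.grading d,
      L.br f₁ f₂ (phipow L m (L.br f g h)) =
        L.br (L.br f₁ f₂ (phipow L m f)) (phipow L (m + 1) g) (phipow L (m + 1) h)
          + ρ (a₁ + a₂) b •
            L.br (phipow L (m + 1) f) (L.br f₁ f₂ (phipow L m g)) (phipow L (m + 1) h)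
          + ρ (a₁ + a₂) (b + c) •
            L.br (phipow L (m + 1) f) (phipow L (m + 1) g)
              (L.br f₁ f₂ (phipow L m h))) := by
  have hpow_mem : ∀ (n : ℕ) (b : G), ∀ f ∈ L.grading b, phipow L n f ∈ L.grading b := by
    intro n
    induction n with
    | zero => intro b f hf; simpa [phipow] using hf
    | succ n ih =>
      intro b f hf
      have : phipow L (n + 1) f = L.φ (phipow L n f) := by
        simp [phipow, pow_succ']
      rw [this]
      exact L.φ_even b _ (ih b f hf)
  have hpm : ∀ (n : ℕ) (x : A), phipow L n (L.φ x) = L.φ (phipow L n x) := by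
    intro n x
    have h1 : phipow L n * (L.φ : Module.End k A) = (L.φ : Module.End k A) * phipow L n := by
      simp [phipow, ← pow_succ, ← pow_succ']
    exact congrFun (congrArg (fun e : Module.End k A => (e : A → A)) h1) x
  have hpmul : ∀ (n : ℕ) (f g h : A),
      phipow L n (L.br f g h) = L.br (phipow L n f) (phipow L n g) (phipow L n h) := by
    intro n
    induction n with
    | zero => intro f g h; simp [phipow]
    | succ n ih =>
      intro f g h
      have e : ∀ x : A, phipow L (n + 1) x = L.φ (phipow L n x) := by
        intro x
        simp [phipow, pow_succ']
      rw [e, e, e, e, ih, hmul]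
  constructor
  · intro g
    rw [hpm, hmul, hφf₁, hφf₂]
  · intro b c d f hf g hg h hh
    have e : ∀ x : A, phipow L (m + 1) x = L.φ (phipow L m x) := by
      intro x
      simp [phipow, pow_succ']
    rw [hpmul, e, e, e]
    have := L.fund a₁ a₂ b c d f₁ hf₁ f₂ hf₂ (phipow L m f) (hpow_mem m b f hf)
      (phipow L m g) (hpow_mem m c g hg) (phipow L m h) (hpow_mem m d h hh)
    rw [hφf₁, hφf₂] at this
    exact this
end

section
/- Let (A,[·,·,·]_A,ρ,φ) be a 3-Hom-ρ-Lie algebra whose adjoint action ad(f₁,f₂)(f₃) = [f₁,f₂,f₃]_A (with β = φ) satisfies the four dualizability conditions: (1) φ∘ad([(f₁,f₂),(g₁,g₂)]_L) = ad(f₁,f₂)ad(φg₁,φg₂) − ρ(f₁+f₂,g₁+g₂)ad(g₁,g₂)ad(φf₁,φf₂); (2) φ∘ad([g₁,g₂,g₃],φf) = −ρ(g₁+g₂,g₃+f)ad(g₃,f)ad(φg₁,φg₂) − ρ(g₂+g₃,g₁+f)ad(g₁,f)ad(φg₂,φg₃) − ρ(g₃+g₁,g₂+f)ad(g₂,f)ad(φg₃,φg₁);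 (3) φ∘ad(φg,[f₁,f₂,f₃]) = −ρ(f₁+f₂,f₃)ad(g,f₃)ad(φf₁,φf₂) − ad(g,f₁)ad(φf₂,φf₃) − ρ(f₁+f₂,f₃)ρ(f₁+f₃,f₂)ad(g,f₂)ad(φf₃,φf₁); (4) ρ(f₁+f₂,g₁)·φ∘ad(φg₁,[f₁,f₂,g₂]) + φ∘ad([f₁,f₂,g₁],φg₂) = ad(f₁,f₂)ad(φg₁,φg₂) − ρ(f₁+f₂,g₁+g₂)ad(g₁,g₂)ad(φf₁,φf₂). Then the map ad* : A × A → End(A*) defined by ad*(f₁,f₂)(ϱ)(f₃) = −ρ(f₁+f₂,ϱ)·ϱ([f₁,f₂,f₃]_A), together with β̃(ϱ) = ϱ∘φ, is a representation of A on A* (the coadjoint representation). -/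
/-- The graded pieces of the graded dual of a `G`-graded vector space:
`V*ₐ = {α : α v = 0 for every homogeneous v of degree ≠ -a}`. -/
def dualGrading {k G V : Type*} [Field k] [AddCommGroup G]
    [AddCommGroup V] [Module k V] (𝒱 : G → Submodule k V) (a : G) :
    Submodule k (Module.Dual k V) where
  carrier := {α | ∀ b : G, b ≠ -a → ∀ v ∈ 𝒱 b, α v = 0}
  add_mem' := fun hα hβ b hb v hv => by
    simp only [LinearMap.add_apply, hα b hb v hv, hβ b hb v hv, add_zero]
  zero_mem' := fun b hb v hv => rfl
  smul_mem' := fun c α hα b hb v hv => by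
    simp only [LinearMap.smul_apply, hα b hb v hv, smul_zero]

lemma mem_dualGrading {k G V : Type*} [Field k] [AddCommGroup G]
    [AddCommGroup V] [Module k V] {Vg : G → Submodule k V} {a : G}
    {α : Module.Dual k V} :
    α ∈ dualGrading Vg a ↔ ∀ b : G, b ≠ -a → ∀ v ∈ Vg b, α v = 0 := Iff.rfl

set_option maxHeartbeats 1000000 in
/-- If the adjoint action `ad(f₁,f₂) = [f₁,f₂,·]` of a
`3`-Hom-`ρ`-Lie algebra `A` (with `β = φ`) satisfies the four dualizability
conditions, then the coadjoint map `ad*(f₁,f₂)(ϱ) = −ρ(f₁+f₂,ϱ) ϱ∘ad(f₁,f₂)`,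
together with `β̃(ϱ) = ϱ∘φ`, is a representation of `A` on the graded dual `A*`. -/
theorem coadjoint_isRep {k G A : Type*} [Field k] [AddCommGroup G] [DecidableEq G]
    [AddCommGroup A] [Module k A] (ρ : G → G → k)
    (hρ₁ : ∀ a b : G, ρ a b * ρ b a = 1)
    (hρ₂ : ∀ a b c : G, ρ (a + b) c = ρ a c * ρ b c)
    (L : ThreeHomRhoLie k G A ρ)
    (h₁ : ∀ (a₁ a₂ b₁ b₂ : G), ∀ f₁ ∈ L.grading a₁, ∀ f₂ ∈ L.grading a₂,
      ∀ g₁ ∈ L.grading b₁, ∀ g₂ ∈ L.grading b₂,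
      L.φ * (L.br (L.br f₁ f₂ g₁) (L.φ g₂)
          + ρ (a₁ + a₂) b₁ • L.br (L.φ g₁) (L.br f₁ f₂ g₂)) =
        L.br f₁ f₂ * L.br (L.φ g₁) (L.φ g₂)
          - ρ (a₁ + a₂) (b₁ + b₂) • (L.br g₁ g₂ * L.br (L.φ f₁) (L.φ f₂)))
    (h₂ : ∀ (b₁ b₂ b₃ c : G), ∀ g₁ ∈ L.grading b₁, ∀ g₂ ∈ L.grading b₂,
      ∀ g₃ ∈ L.grading b₃, ∀ f ∈ L.grading c,
      L.φ * L.br (L.br g₁ g₂ g₃) (L.φ f) =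
        -(ρ (b₁ + b₂) (b₃ + c) • (L.br g₃ f * L.br (L.φ g₁) (L.φ g₂)))
          - ρ (b₂ + b₃) (b₁ + c) • (L.br g₁ f * L.br (L.φ g₂) (L.φ g₃))
          - ρ (b₃ + b₁) (b₂ + c) • (L.br g₂ f * L.br (L.φ g₃) (L.φ g₁)))
    (h₃ : ∀ (c a₁ a₂ a₃ : G), ∀ g ∈ L.grading c, ∀ f₁ ∈ L.grading a₁,
      ∀ f₂ ∈ L.grading a₂, ∀ f₃ ∈ L.grading a₃,
      L.φ * L.br (L.φ g) (L.br f₁ f₂ f₃) =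
        -(ρ (a₁ + a₂) a₃ • (L.br g f₃ * L.br (L.φ f₁) (L.φ f₂)))
          - L.br g f₁ * L.br (L.φ f₂) (L.φ f₃)
          - (ρ (a₁ + a₂) a₃ * ρ (a₁ + a₃) a₂) • (L.br g f₂ * L.br (L.φ f₃) (L.φ f₁)))
    (h₄ : ∀ (a₁ a₂ b₁ b₂ : G), ∀ f₁ ∈ L.grading a₁, ∀ f₂ ∈ L.grading a₂,
      ∀ g₁ ∈ L.grading b₁, ∀ g₂ ∈ L.grading b₂,
      ρ (a₁ + a₂) b₁ • (L.φ * L.br (L.φ g₁) (L.br f₁ f₂ g₂))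
          + L.φ * L.br (L.br f₁ f₂ g₁) (L.φ g₂) =
        L.br f₁ f₂ * L.br (L.φ g₁) (L.φ g₂)
          - ρ (a₁ + a₂) (b₁ + b₂) • (L.br g₁ g₂ * L.br (L.φ f₁) (L.φ f₂)))
    (adStar : A →ₗ[k] A →ₗ[k] Module.End k (Module.Dual k A))
    (hadStar : ∀ (a₁ a₂ c : G), ∀ f₁ ∈ L.grading a₁, ∀ f₂ ∈ L.grading a₂,
      ∀ ϱ ∈ dualGrading L.grading c,
        adStar f₁ f₂ ϱ = (-(ρ (a₁ + a₂) c)) • (ϱ ∘ₗ (L.br f₁ f₂ : A →ₗ[k] A))) :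
    IsRhoRep L (dualGrading L.grading) (L.φ.dualMap) adStar := by
    classical
  have hne : ∀ a b : G, ρ a b ≠ 0 := by
    intro a b h
    simpa [h] using hρ₁ a b
  have hadd : ∀ a b c : G, ρ a (b + c) = ρ a b * ρ a c := by
    intro a b c
    calc ρ a (b + c) = ρ a (b + c) * ((ρ b a * ρ a b) * (ρ c a * ρ a c)) := by
          rw [mul_comm (ρ b a), hρ₁, mul_comm (ρ c a), hρ₁]; ring
      _ = (ρ a (b + c) * ρ (b + c) a) * (ρ a b * ρ a c) := by rw [hρ₂]; ring
      _ = ρ a b * ρ a c := by rw [hρ₁]; ring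
  have hmem : ∀ {a b c : G} {f g : A}, f ∈ L.grading a → g ∈ L.grading b →
      ∀ {ϱ : Module.Dual k A}, ϱ ∈ dualGrading L.grading c →
      (ϱ ∘ₗ (L.br f g : A →ₗ[k] A)) ∈ dualGrading L.grading (a + b + c) := by
    intro a b c f g hf hg ϱ hϱ
    rw [mem_dualGrading]
    intro b' hb' v hv
    have h0 : a + b + b' ≠ -c := by
      intro hEq
      apply hb'
      have hc : c = -(a + b + b') := by rw [hEq, neg_neg]
      rw [hc]; abel
    simpa using hϱ (a + b + b') h0 _ (L.br_deg a b b' f hf g hg v hv)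
  have hdm : ∀ {c : G} {ϱ : Module.Dual k A}, ϱ ∈ dualGrading L.grading c →
      L.φ.dualMap ϱ ∈ dualGrading L.grading c := by
    intro c ϱ hϱ
    rw [mem_dualGrading]
    intro b hb v hv
    simpa using hϱ b hb _ (L.φ_even b v hv)
  refine ⟨?_, ?_, ?_, ?_, ?_, ?_, ?_⟩
  · -- β_even
    intro a v hv
    exact hdm hv
  · -- μ_deg
    intro a b c f hf g hg ϱ hϱ
    rw [hadStar a b c f hf g hg ϱ hϱ]
    exact Submodule.smul_mem _ _ (hmem hf hg hϱ)
  · -- μ_skew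
    intro a b c f hf g hg ϱ hϱ
    rw [hadStar a b c f hf g hg ϱ hϱ, hadStar b a c g hg f hf ϱ hϱ]
    refine LinearMap.ext fun w => ?_
    simp only [LinearMap.smul_apply, LinearMap.comp_apply, smul_eq_mul]
    rw [L.skew₁₂ a b f hf g hg w]
    simp only [map_smul, smul_eq_mul, hρ₂]
    ring
  · -- rep₁
    intro a₁ a₂ b₁ b₂ c f₁ hf₁ f₂ hf₂ g₁ hg₁ g₂ hg₂ ϱ hϱ
    have hφf₁ := L.φ_even a₁ f₁ hf₁
    have hφf₂ := L.φ_even a₂ f₂ hf₂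
    have hφg₁ := L.φ_even b₁ g₁ hg₁
    have hφg₂ := L.φ_even b₂ g₂ hg₂
    have hbr₁ : L.br f₁ f₂ g₁ ∈ L.grading (a₁ + a₂ + b₁) :=
      L.br_deg a₁ a₂ b₁ f₁ hf₁ f₂ hf₂ g₁ hg₁
    have hbr₂ : L.br f₁ f₂ g₂ ∈ L.grading (a₁ + a₂ + b₂) :=
      L.br_deg a₁ a₂ b₂ f₁ hf₁ f₂ hf₂ g₂ hg₂
    have hβϱ := hdm hϱ
    have hK₁ : (ϱ ∘ₗ (L.br g₁ g₂ : A →ₗ[k] A)) ∈ dualGrading L.grading (b₁ + b₂ + c) :=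
      hmem hg₁ hg₂ hϱ
    have hK₂ : (ϱ ∘ₗ (L.br f₁ f₂ : A →ₗ[k] A)) ∈ dualGrading L.grading (a₁ + a₂ + c) :=
      hmem hf₁ hf₂ hϱ
    refine LinearMap.ext fun w => ?_
    have E₁ : adStar (L.br f₁ f₂ g₁) (L.φ g₂) (L.φ.dualMap ϱ) w
        = -(ρ a₁ c * ρ a₂ c * ρ b₁ c * ρ b₂ c) *
          ϱ (L.φ (L.br (L.br f₁ f₂ g₁) (L.φ g₂) w)) := by
      rw [hadStar (a₁ + a₂ + b₁) b₂ c _ hbr₁ _ hφg₂ _ hβϱ]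
      simp only [LinearMap.smul_apply, LinearMap.comp_apply, LinearMap.dualMap_apply,
        smul_eq_mul, hρ₂, hadd]
      try ring
    have E₂ : adStar (L.φ g₁) (L.br f₁ f₂ g₂) (L.φ.dualMap ϱ) w
        = -(ρ a₁ c * ρ a₂ c * ρ b₁ c * ρ b₂ c) *
          ϱ (L.φ (L.br (L.φ g₁) (L.br f₁ f₂ g₂) w)) := by
      rw [hadStar b₁ (a₁ + a₂ + b₂) c _ hφg₁ _ hbr₂ _ hβϱ]
      simp only [LinearMap.smul_apply, LinearMap.comp_apply, LinearMap.dualMap_apply,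
        smul_eq_mul, hρ₂, hadd]
      try ring
    have E₃ : adStar (L.φ f₁) (L.φ f₂) (adStar g₁ g₂ ϱ) w
        = (ρ b₁ c * ρ b₂ c * ρ a₁ b₁ * ρ a₁ b₂ * ρ a₁ c * ρ a₂ b₁ * ρ a₂ b₂ * ρ a₂ c) *
          ϱ (L.br g₁ g₂ (L.br (L.φ f₁) (L.φ f₂) w)) := by
      rw [hadStar b₁ b₂ c g₁ hg₁ g₂ hg₂ ϱ hϱ, map_smul,
        hadStar a₁ a₂ (b₁ + b₂ + c) _ hφf₁ _ hφf₂ _ hK₁]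
      simp only [LinearMap.smul_apply, LinearMap.comp_apply, smul_eq_mul, hρ₂, hadd]
      try ring
    have E₄ : adStar (L.φ g₁) (L.φ g₂) (adStar f₁ f₂ ϱ) w
        = (ρ a₁ c * ρ a₂ c * ρ b₁ a₁ * ρ b₁ a₂ * ρ b₁ c * ρ b₂ a₁ * ρ b₂ a₂ * ρ b₂ c) *
          ϱ (L.br f₁ f₂ (L.br (L.φ g₁) (L.φ g₂) w)) := by
      rw [hadStar a₁ a₂ c f₁ hf₁ f₂ hf₂ ϱ hϱ, map_smul,
        hadStar b₁ b₂ (a₁ + a₂ + c) _ hφg₁ _ hφg₂ _ hK₂]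
      simp only [LinearMap.smul_apply, LinearMap.comp_apply, smul_eq_mul, hρ₂, hadd]
      try ring
    have key₀ := congrArg ϱ (LinearMap.congr_fun
      (h₁ a₁ a₂ b₁ b₂ f₁ hf₁ f₂ hf₂ g₁ hg₁ g₂ hg₂) w)
    simp only [Module.End.mul_apply, LinearMap.add_apply, LinearMap.sub_apply,
      LinearMap.smul_apply, map_add, map_smul, map_sub, smul_eq_mul, hρ₂, hadd] at key₀
    simp only [LinearMap.add_apply, LinearMap.sub_apply, LinearMap.smul_apply, smul_eq_mul]
    rw [E₁, E₂, E₃, E₄]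
    simp only [hρ₂, hadd]
    linear_combination (norm := ring1) ((-(ρ a₁ c * ρ a₂ c * ρ b₁ c * ρ b₂ c))) * key₀
      + ((ϱ (L.br f₁ f₂ (L.br (L.φ g₁) (L.φ g₂) w)) * ρ a₁ b₂ * ρ a₁ c * ρ a₂ b₁ * ρ a₂ b₂ * ρ a₂ c * ρ b₁ a₂ * ρ b₁ c * ρ b₂ a₁ * ρ b₂ a₂ * ρ b₂ c)) * (hρ₁ a₁ b₁)
      + ((ϱ (L.br f₁ f₂ (L.br (L.φ g₁) (L.φ g₂) w)) * ρ a₁ c * ρ a₂ b₁ * ρ a₂ b₂ * ρ a₂ c * ρ b₁ a₂ * ρ b₁ c * ρ b₂ a₂ * ρ b₂ c)) * (hρ₁ a₁ b₂)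
      + ((ϱ (L.br f₁ f₂ (L.br (L.φ g₁) (L.φ g₂) w)) * ρ a₁ c * ρ a₂ b₂ * ρ a₂ c * ρ b₁ c * ρ b₂ a₂ * ρ b₂ c)) * (hρ₁ a₂ b₁)
      + ((ϱ (L.br f₁ f₂ (L.br (L.φ g₁) (L.φ g₂) w)) * ρ a₁ c * ρ a₂ c * ρ b₁ c * ρ b₂ c)) * (hρ₁ a₂ b₂)
  · -- rep₂
    intro b₁ b₂ b₃ c d g₁ hg₁ g₂ hg₂ g₃ hg₃ f hf ϱ hϱ
    have hφg₁ := L.φ_even b₁ g₁ hg₁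
    have hφg₂ := L.φ_even b₂ g₂ hg₂
    have hφg₃ := L.φ_even b₃ g₃ hg₃
    have hφf := L.φ_even c f hf
    have hbrg : L.br g₁ g₂ g₃ ∈ L.grading (b₁ + b₂ + b₃) :=
      L.br_deg b₁ b₂ b₃ g₁ hg₁ g₂ hg₂ g₃ hg₃
    have hβϱ := hdm hϱ
    have hK₁ : (ϱ ∘ₗ (L.br g₃ f : A →ₗ[k] A)) ∈ dualGrading L.grading (b₃ + c + d) :=
      hmem hg₃ hf hϱ
    have hK₂ : (ϱ ∘ₗ (L.br g₁ f : A →ₗ[k] A)) ∈ dualGrading L.grading (b₁ + c + d) :=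
      hmem hg₁ hf hϱ
    have hK₃ : (ϱ ∘ₗ (L.br g₂ f : A →ₗ[k] A)) ∈ dualGrading L.grading (b₂ + c + d) :=
      hmem hg₂ hf hϱ
    refine LinearMap.ext fun w => ?_
    have E₁ : adStar (L.br g₁ g₂ g₃) (L.φ f) (L.φ.dualMap ϱ) w
        = -(ρ b₁ d * ρ b₂ d * ρ b₃ d * ρ c d) *
          ϱ (L.φ (L.br (L.br g₁ g₂ g₃) (L.φ f) w)) := by
      rw [hadStar (b₁ + b₂ + b₃) c d _ hbrg _ hφf _ hβϱ]
      simp only [LinearMap.smul_apply, LinearMap.comp_apply, LinearMap.dualMap_apply,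
        smul_eq_mul, hρ₂, hadd]
      try ring
    have E₂ : adStar (L.φ g₁) (L.φ g₂) (adStar g₃ f ϱ) w
        = (ρ b₃ d * ρ c d * ρ b₁ b₃ * ρ b₁ c * ρ b₁ d * ρ b₂ b₃ * ρ b₂ c * ρ b₂ d) *
          ϱ (L.br g₃ f (L.br (L.φ g₁) (L.φ g₂) w)) := by
      rw [hadStar b₃ c d g₃ hg₃ f hf ϱ hϱ, map_smul,
        hadStar b₁ b₂ (b₃ + c + d) _ hφg₁ _ hφg₂ _ hK₁]
      simp only [LinearMap.smul_apply, LinearMap.comp_apply, smul_eq_mul, hρ₂, hadd]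
      try ring
    have E₃ : adStar (L.φ g₂) (L.φ g₃) (adStar g₁ f ϱ) w
        = (ρ b₁ d * ρ c d * ρ b₂ b₁ * ρ b₂ c * ρ b₂ d * ρ b₃ b₁ * ρ b₃ c * ρ b₃ d) *
          ϱ (L.br g₁ f (L.br (L.φ g₂) (L.φ g₃) w)) := by
      rw [hadStar b₁ c d g₁ hg₁ f hf ϱ hϱ, map_smul,
        hadStar b₂ b₃ (b₁ + c + d) _ hφg₂ _ hφg₃ _ hK₂]
      simp only [LinearMap.smul_apply, LinearMap.comp_apply, smul_eq_mul, hρ₂, hadd]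
      try ring
    have E₄ : adStar (L.φ g₃) (L.φ g₁) (adStar g₂ f ϱ) w
        = (ρ b₂ d * ρ c d * ρ b₃ b₂ * ρ b₃ c * ρ b₃ d * ρ b₁ b₂ * ρ b₁ c * ρ b₁ d) *
          ϱ (L.br g₂ f (L.br (L.φ g₃) (L.φ g₁) w)) := by
      rw [hadStar b₂ c d g₂ hg₂ f hf ϱ hϱ, map_smul,
        hadStar b₃ b₁ (b₂ + c + d) _ hφg₃ _ hφg₁ _ hK₃]
      simp only [LinearMap.smul_apply, LinearMap.comp_apply, smul_eq_mul, hρ₂, hadd]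
      try ring
    have key₀ := congrArg ϱ (LinearMap.congr_fun
      (h₃ c b₁ b₂ b₃ f hf g₁ hg₁ g₂ hg₂ g₃ hg₃) w)
    simp only [Module.End.mul_apply, LinearMap.add_apply, LinearMap.sub_apply,
      LinearMap.neg_apply, LinearMap.smul_apply, smul_eq_mul] at key₀
    rw [L.skew₁₂ c (b₁ + b₂ + b₃) (L.φ f) hφf (L.br g₁ g₂ g₃) hbrg,
      L.skew₁₂ c b₃ f hf g₃ hg₃, L.skew₁₂ c b₁ f hf g₁ hg₁,
      L.skew₁₂ c b₂ f hf g₂ hg₂] at key₀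
    simp only [map_sub, map_smul, map_neg, smul_eq_mul, hρ₂, hadd] at key₀
    simp only [LinearMap.add_apply, LinearMap.sub_apply, LinearMap.smul_apply, smul_eq_mul]
    rw [E₁, E₂, E₃, E₄]
    simp only [hρ₂, hadd]
    linear_combination (norm := ring1) ((ρ b₁ c * ρ b₁ d * ρ b₂ c * ρ b₂ d * ρ b₃ c * ρ b₃ d * ρ c d)) * key₀
      + ((-ϱ (L.br g₁ f (L.br (L.φ g₂) (L.φ g₃) w)) * ρ b₁ b₃ * ρ b₁ d * ρ b₂ c * ρ b₂ d * ρ b₃ b₁ * ρ b₃ c * ρ b₃ d * ρ c d)) * (hρ₁ b₁ b₂)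
      + ((-ϱ (L.br g₁ f (L.br (L.φ g₂) (L.φ g₃) w)) * ρ b₁ d * ρ b₂ c * ρ b₂ d * ρ b₃ c * ρ b₃ d * ρ c d)) * (hρ₁ b₁ b₃)
      + ((ϱ (L.φ (L.br (L.br g₁ g₂ g₃) (L.φ f) w)) * ρ b₁ d * ρ b₂ c * ρ b₂ d * ρ b₃ c * ρ b₃ d * ρ c b₂ * ρ c b₃ * ρ c d) + (ϱ (L.br g₁ f (L.br (L.φ g₂) (L.φ g₃) w)) * ρ b₁ d * ρ b₂ c * ρ b₂ d * ρ b₃ c * ρ b₃ d * ρ c d)) * (hρ₁ b₁ c)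
      + ((ϱ (L.br g₂ f (L.br (L.φ g₃) (L.φ g₁) w)) * ρ b₁ b₂ * ρ b₁ b₃ * ρ b₁ c * ρ b₁ d * ρ b₂ c * ρ b₂ d * ρ b₃ c * ρ b₃ d * ρ c b₂ * ρ c d) + (-ϱ (L.br g₂ f (L.br (L.φ g₃) (L.φ g₁) w)) * ρ b₁ b₂ * ρ b₁ b₃ * ρ b₁ c * ρ b₁ d * ρ b₂ d * ρ b₃ c * ρ b₃ d * ρ c d)) * (hρ₁ b₂ b₃)
      + ((ϱ (L.φ (L.br (L.br g₁ g₂ g₃) (L.φ f) w)) * ρ b₁ d * ρ b₂ d * ρ b₃ c * ρ b₃ d * ρ c b₃ * ρ c d) + (ϱ (L.br g₂ f (L.br (L.φ g₃) (L.φ g₁) w)) * ρ b₁ b₂ * ρ b₁ b₃ * ρ b₁ c * ρ b₁ d * ρ b₂ d * ρ b₃ c * ρ b₃ d * ρ c d)) * (hρ₁ b₂ c)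
      + ((ϱ (L.φ (L.br (L.br g₁ g₂ g₃) (L.φ f) w)) * ρ b₁ d * ρ b₂ d * ρ b₃ d * ρ c d) + (ϱ (L.br g₃ f (L.br (L.φ g₁) (L.φ g₂) w)) * ρ b₁ b₃ * ρ b₁ c * ρ b₁ d * ρ b₂ b₃ * ρ b₂ c * ρ b₂ d * ρ b₃ d * ρ c d)) * (hρ₁ b₃ c)
  · -- rep₃
    intro c a₁ a₂ a₃ d g hg f₁ hf₁ f₂ hf₂ f₃ hf₃ ϱ hϱ
    have hφg := L.φ_even c g hg
    have hφf₁ := L.φ_even a₁ f₁ hf₁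
    have hφf₂ := L.φ_even a₂ f₂ hf₂
    have hφf₃ := L.φ_even a₃ f₃ hf₃
    have hbrf : L.br f₁ f₂ f₃ ∈ L.grading (a₁ + a₂ + a₃) :=
      L.br_deg a₁ a₂ a₃ f₁ hf₁ f₂ hf₂ f₃ hf₃
    have hβϱ := hdm hϱ
    have hK₁ : (ϱ ∘ₗ (L.br g f₃ : A →ₗ[k] A)) ∈ dualGrading L.grading (c + a₃ + d) :=
      hmem hg hf₃ hϱ
    have hK₂ : (ϱ ∘ₗ (L.br g f₁ : A →ₗ[k] A)) ∈ dualGrading L.grading (c + a₁ + d) :=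
      hmem hg hf₁ hϱ
    have hK₃ : (ϱ ∘ₗ (L.br g f₂ : A →ₗ[k] A)) ∈ dualGrading L.grading (c + a₂ + d) :=
      hmem hg hf₂ hϱ
    refine LinearMap.ext fun w => ?_
    have E₁ : adStar (L.φ g) (L.br f₁ f₂ f₃) (L.φ.dualMap ϱ) w
        = -(ρ c d * ρ a₁ d * ρ a₂ d * ρ a₃ d) *
          ϱ (L.φ (L.br (L.φ g) (L.br f₁ f₂ f₃) w)) := by
      rw [hadStar c (a₁ + a₂ + a₃) d _ hφg _ hbrf _ hβϱ]
      simp only [LinearMap.smul_apply, LinearMap.comp_apply, LinearMap.dualMap_apply,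
        smul_eq_mul, hρ₂, hadd]
      try ring
    have E₂ : adStar (L.φ f₁) (L.φ f₂) (adStar g f₃ ϱ) w
        = (ρ c d * ρ a₃ d * ρ a₁ c * ρ a₁ a₃ * ρ a₁ d * ρ a₂ c * ρ a₂ a₃ * ρ a₂ d) *
          ϱ (L.br g f₃ (L.br (L.φ f₁) (L.φ f₂) w)) := by
      rw [hadStar c a₃ d g hg f₃ hf₃ ϱ hϱ, map_smul,
        hadStar a₁ a₂ (c + a₃ + d) _ hφf₁ _ hφf₂ _ hK₁]
      simp only [LinearMap.smul_apply, LinearMap.comp_apply, smul_eq_mul, hρ₂, hadd]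
      try ring
    have E₃ : adStar (L.φ f₂) (L.φ f₃) (adStar g f₁ ϱ) w
        = (ρ c d * ρ a₁ d * ρ a₂ c * ρ a₂ a₁ * ρ a₂ d * ρ a₃ c * ρ a₃ a₁ * ρ a₃ d) *
          ϱ (L.br g f₁ (L.br (L.φ f₂) (L.φ f₃) w)) := by
      rw [hadStar c a₁ d g hg f₁ hf₁ ϱ hϱ, map_smul,
        hadStar a₂ a₃ (c + a₁ + d) _ hφf₂ _ hφf₃ _ hK₂]
      simp only [LinearMap.smul_apply, LinearMap.comp_apply, smul_eq_mul, hρ₂, hadd]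
      try ring
    have E₄ : adStar (L.φ f₃) (L.φ f₁) (adStar g f₂ ϱ) w
        = (ρ c d * ρ a₂ d * ρ a₃ c * ρ a₃ a₂ * ρ a₃ d * ρ a₁ c * ρ a₁ a₂ * ρ a₁ d) *
          ϱ (L.br g f₂ (L.br (L.φ f₃) (L.φ f₁) w)) := by
      rw [hadStar c a₂ d g hg f₂ hf₂ ϱ hϱ, map_smul,
        hadStar a₃ a₁ (c + a₂ + d) _ hφf₃ _ hφf₁ _ hK₃]
      simp only [LinearMap.smul_apply, LinearMap.comp_apply, smul_eq_mul, hρ₂, hadd]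
      try ring
    have key₀ := congrArg ϱ (LinearMap.congr_fun
      (h₃ c a₁ a₂ a₃ g hg f₁ hf₁ f₂ hf₂ f₃ hf₃) w)
    simp only [Module.End.mul_apply, LinearMap.add_apply, LinearMap.sub_apply,
      LinearMap.neg_apply, LinearMap.smul_apply, map_add, map_smul, map_sub, map_neg,
      smul_eq_mul, hρ₂, hadd] at key₀
    simp only [LinearMap.add_apply, LinearMap.sub_apply, LinearMap.smul_apply, smul_eq_mul]
    rw [E₁, E₂, E₃, E₄]
    simp only [hρ₂, hadd]
    linear_combination (norm := ring1) ((-(ρ a₁ d * ρ a₂ d * ρ a₃ d * ρ c d))) * key₀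
      + ((-ϱ (L.br g f₁ (L.br (L.φ f₂) (L.φ f₃) w)) * ρ a₁ a₃ * ρ a₁ d * ρ a₂ c * ρ a₂ d * ρ a₃ a₁ * ρ a₃ c * ρ a₃ d * ρ c a₂ * ρ c a₃ * ρ c d)) * (hρ₁ a₁ a₂)
      + ((-ϱ (L.br g f₁ (L.br (L.φ f₂) (L.φ f₃) w)) * ρ a₁ d * ρ a₂ c * ρ a₂ d * ρ a₃ c * ρ a₃ d * ρ c a₂ * ρ c a₃ * ρ c d)) * (hρ₁ a₁ a₃)
      + ((-ϱ (L.br g f₃ (L.br (L.φ f₁) (L.φ f₂) w)) * ρ a₁ a₃ * ρ a₁ d * ρ a₂ a₃ * ρ a₂ c * ρ a₂ d * ρ a₃ d * ρ c a₂ * ρ c d) + (-ϱ (L.br g f₂ (L.br (L.φ f₃) (L.φ f₁) w)) * ρ a₁ a₂ * ρ a₁ a₃ * ρ a₁ d * ρ a₂ a₃ * ρ a₂ d * ρ a₃ a₂ * ρ a₃ c * ρ a₃ d * ρ c a₃ * ρ c d)) * (hρ₁ a₁ c)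
      + ((-ϱ (L.br g f₂ (L.br (L.φ f₃) (L.φ f₁) w)) * ρ a₁ a₂ * ρ a₁ a₃ * ρ a₁ d * ρ a₂ d * ρ a₃ c * ρ a₃ d * ρ c a₃ * ρ c d) + (ϱ (L.br g f₂ (L.br (L.φ f₃) (L.φ f₁) w)) * ρ a₁ a₂ * ρ a₁ a₃ * ρ a₁ d * ρ a₂ d * ρ a₃ d * ρ c d)) * (hρ₁ a₂ a₃)
      + ((-ϱ (L.br g f₃ (L.br (L.φ f₁) (L.φ f₂) w)) * ρ a₁ a₃ * ρ a₁ d * ρ a₂ a₃ * ρ a₂ d * ρ a₃ d * ρ c d) + (-ϱ (L.br g f₁ (L.br (L.φ f₂) (L.φ f₃) w)) * ρ a₁ d * ρ a₂ d * ρ a₃ c * ρ a₃ d * ρ c a₃ * ρ c d)) * (hρ₁ a₂ c)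
      + ((-ϱ (L.br g f₁ (L.br (L.φ f₂) (L.φ f₃) w)) * ρ a₁ d * ρ a₂ d * ρ a₃ d * ρ c d) + (-ϱ (L.br g f₂ (L.br (L.φ f₃) (L.φ f₁) w)) * ρ a₁ a₂ * ρ a₁ a₃ * ρ a₁ d * ρ a₂ d * ρ a₃ d * ρ c d)) * (hρ₁ a₃ c)
  · -- rep₄
    intro a₁ a₂ b₁ b₂ c f₁ hf₁ f₂ hf₂ g₁ hg₁ g₂ hg₂ ϱ hϱ
    have hφf₁ := L.φ_even a₁ f₁ hf₁
    have hφf₂ := L.φ_even a₂ f₂ hf₂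
    have hφg₁ := L.φ_even b₁ g₁ hg₁
    have hφg₂ := L.φ_even b₂ g₂ hg₂
    have hbr₁ : L.br f₁ f₂ g₁ ∈ L.grading (a₁ + a₂ + b₁) :=
      L.br_deg a₁ a₂ b₁ f₁ hf₁ f₂ hf₂ g₁ hg₁
    have hbr₂ : L.br f₁ f₂ g₂ ∈ L.grading (a₁ + a₂ + b₂) :=
      L.br_deg a₁ a₂ b₂ f₁ hf₁ f₂ hf₂ g₂ hg₂
    have hβϱ := hdm hϱ
    have hK₁ : (ϱ ∘ₗ (L.br g₁ g₂ : A →ₗ[k] A)) ∈ dualGrading L.grading (b₁ + b₂ + c) :=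
      hmem hg₁ hg₂ hϱ
    have hK₂ : (ϱ ∘ₗ (L.br f₁ f₂ : A →ₗ[k] A)) ∈ dualGrading L.grading (a₁ + a₂ + c) :=
      hmem hf₁ hf₂ hϱ
    refine LinearMap.ext fun w => ?_
    have E₁ : adStar (L.br f₁ f₂ g₁) (L.φ g₂) (L.φ.dualMap ϱ) w
        = -(ρ a₁ c * ρ a₂ c * ρ b₁ c * ρ b₂ c) *
          ϱ (L.φ (L.br (L.br f₁ f₂ g₁) (L.φ g₂) w)) := by
      rw [hadStar (a₁ + a₂ + b₁) b₂ c _ hbr₁ _ hφg₂ _ hβϱ]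
      simp only [LinearMap.smul_apply, LinearMap.comp_apply, LinearMap.dualMap_apply,
        smul_eq_mul, hρ₂, hadd]
      try ring
    have E₂ : adStar (L.φ g₁) (L.br f₁ f₂ g₂) (L.φ.dualMap ϱ) w
        = -(ρ a₁ c * ρ a₂ c * ρ b₁ c * ρ b₂ c) *
          ϱ (L.φ (L.br (L.φ g₁) (L.br f₁ f₂ g₂) w)) := by
      rw [hadStar b₁ (a₁ + a₂ + b₂) c _ hφg₁ _ hbr₂ _ hβϱ]
      simp only [LinearMap.smul_apply, LinearMap.comp_apply, LinearMap.dualMap_apply,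
        smul_eq_mul, hρ₂, hadd]
      try ring
    have E₃ : adStar (L.φ f₁) (L.φ f₂) (adStar g₁ g₂ ϱ) w
        = (ρ b₁ c * ρ b₂ c * ρ a₁ b₁ * ρ a₁ b₂ * ρ a₁ c * ρ a₂ b₁ * ρ a₂ b₂ * ρ a₂ c) *
          ϱ (L.br g₁ g₂ (L.br (L.φ f₁) (L.φ f₂) w)) := by
      rw [hadStar b₁ b₂ c g₁ hg₁ g₂ hg₂ ϱ hϱ, map_smul,
        hadStar a₁ a₂ (b₁ + b₂ + c) _ hφf₁ _ hφf₂ _ hK₁]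
      simp only [LinearMap.smul_apply, LinearMap.comp_apply, smul_eq_mul, hρ₂, hadd]
      try ring
    have E₄ : adStar (L.φ g₁) (L.φ g₂) (adStar f₁ f₂ ϱ) w
        = (ρ a₁ c * ρ a₂ c * ρ b₁ a₁ * ρ b₁ a₂ * ρ b₁ c * ρ b₂ a₁ * ρ b₂ a₂ * ρ b₂ c) *
          ϱ (L.br f₁ f₂ (L.br (L.φ g₁) (L.φ g₂) w)) := by
      rw [hadStar a₁ a₂ c f₁ hf₁ f₂ hf₂ ϱ hϱ, map_smul,
        hadStar b₁ b₂ (a₁ + a₂ + c) _ hφg₁ _ hφg₂ _ hK₂]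
      simp only [LinearMap.smul_apply, LinearMap.comp_apply, smul_eq_mul, hρ₂, hadd]
      try ring
    have key₀ := congrArg ϱ (LinearMap.congr_fun
      (h₄ a₁ a₂ b₁ b₂ f₁ hf₁ f₂ hf₂ g₁ hg₁ g₂ hg₂) w)
    simp only [Module.End.mul_apply, LinearMap.add_apply, LinearMap.sub_apply,
      LinearMap.smul_apply, map_add, map_smul, map_sub, smul_eq_mul, hρ₂, hadd] at key₀
    simp only [LinearMap.add_apply, LinearMap.sub_apply, LinearMap.smul_apply, smul_eq_mul]
    rw [E₁, E₂, E₃, E₄]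
    simp only [hρ₂, hadd]
    linear_combination (norm := ring1) ((ρ a₁ c * ρ a₂ c * ρ b₁ c * ρ b₂ c)) * key₀
      + ((-ϱ (L.br f₁ f₂ (L.br (L.φ g₁) (L.φ g₂) w)) * ρ a₁ b₂ * ρ a₁ c * ρ a₂ b₁ * ρ a₂ b₂ * ρ a₂ c * ρ b₁ a₂ * ρ b₁ c * ρ b₂ a₁ * ρ b₂ a₂ * ρ b₂ c)) * (hρ₁ a₁ b₁)
      + ((-ϱ (L.br f₁ f₂ (L.br (L.φ g₁) (L.φ g₂) w)) * ρ a₁ c * ρ a₂ b₁ * ρ a₂ b₂ * ρ a₂ c * ρ b₁ a₂ * ρ b₁ c * ρ b₂ a₂ * ρ b₂ c)) * (hρ₁ a₁ b₂)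
      + ((-ϱ (L.br f₁ f₂ (L.br (L.φ g₁) (L.φ g₂) w)) * ρ a₁ c * ρ a₂ b₂ * ρ a₂ c * ρ b₁ c * ρ b₂ a₂ * ρ b₂ c)) * (hρ₁ a₂ b₁)
      + ((-ϱ (L.br f₁ f₂ (L.br (L.φ g₁) (L.φ g₂) w)) * ρ a₁ c * ρ a₂ c * ρ b₁ c * ρ b₂ c)) * (hρ₁ a₂ b₂)
end

section
/- Let (A,[·,·,·]_A,ρ,φ) be a 3-Hom-ρ-Lie algebra such that the coadjoint action ad*(f₁,f₂)(ϱ) = −ρ(f₁+f₂,ϱ)·ϱ∘ad(f₁,f₂) together with β̃(ϱ) = ϱ∘φ is a representation of A on A*. Let ω : A × A × A → A* be an even trilinear ρ-skew-symmetric map. Define on the G-graded space A ⊕ A* the bracket [f₁+α₁, f₂+α₂, f₃+α₃]_{A⊕A*} = [f₁,f₂,f₃]_A + ω(f₁,f₂,f₃) + ad*(f₁,f₂)(α₃) + ρ(f₁+f₂,f₃)ad*(f₃,f₁)(α₂) + ρ(f₁,f₂+f₃)ad*(f₂,f₃)(α₁) and the linear map φ′(f+α) = φ(f) + α∘φ.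 Then (A ⊕ A*, [·,·,·]_{A⊕A*}, ρ, φ′) is a 3-Hom-ρ-Lie algebra if and only if ω is a 1-cocycle with respect to the representation ad*. -/
set_option maxHeartbeats 4000000 in
/-- Let the coadjoint action `ad*` (with `β̃(ϱ) = ϱ∘φ`) be a
representation of the `3`-Hom-`ρ`-Lie algebra `A` on the graded dual `A*`, and let
`ω : A×A×A → A*` be an even trilinear `ρ`-skew-symmetric map.  The bracket on
`A ⊕ A*` given by
`[f₁+α₁,f₂+α₂,f₃+α₃] = [f₁,f₂,f₃] + ω(f₁,f₂,f₃) + ad*(f₁,f₂)α₃ +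
ρ(f₁+f₂,f₃) ad*(f₃,f₁)α₂ + ρ(f₁,f₂+f₃) ad*(f₂,f₃)α₁` together with
`φ'(f+α) = (φ f, α∘φ)` satisfies the `ρ`-fundamental identity on homogeneous
elements of `A ⊕ A*` (i.e. `A ⊕ A*` is a `3`-Hom-`ρ`-Lie algebra, the
`T*_ω`-extension) iff `ω` is a `1`-cocycle with respect to `ad*`. -/
theorem Tstar_extension_iff_cocycle {k G A : Type*} [Field k] [AddCommGroup G]
    [DecidableEq G] [AddCommGroup A] [Module k A] (ρ : G → G → k)
    (hρ₁ : ∀ a b : G, ρ a b * ρ b a = 1)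
    (hρ₂ : ∀ a b c : G, ρ (a + b) c = ρ a c * ρ b c)
    (L : ThreeHomRhoLie k G A ρ)
    (adStar : A →ₗ[k] A →ₗ[k] Module.End k (Module.Dual k A))
    (hadStar : ∀ (a₁ a₂ c : G), ∀ f₁ ∈ L.grading a₁, ∀ f₂ ∈ L.grading a₂,
      ∀ ϱ ∈ dualGrading L.grading c,
        adStar f₁ f₂ ϱ = (-(ρ (a₁ + a₂) c)) • (ϱ ∘ₗ (L.br f₁ f₂ : A →ₗ[k] A)))
    (hadRep : IsRhoRep L (dualGrading L.grading) (L.φ.dualMap) adStar)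
    (ω : A →ₗ[k] A →ₗ[k] A →ₗ[k] Module.Dual k A)
    (hω_deg : ∀ (a b c : G), ∀ f ∈ L.grading a, ∀ g ∈ L.grading b, ∀ h ∈ L.grading c,
      ω f g h ∈ dualGrading L.grading (a + b + c))
    (hω_skew₁₂ : ∀ (a b : G), ∀ f ∈ L.grading a, ∀ g ∈ L.grading b, ∀ h : A,
      ω f g h = (-(ρ a b)) • ω g f h)
    (hω_skew₂₃ : ∀ (b c : G), ∀ g ∈ L.grading b, ∀ h ∈ L.grading c, ∀ f : A,
      ω f g h = (-(ρ b c)) • ω f h g)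
    (Br : (A × Module.Dual k A) →ₗ[k] (A × Module.Dual k A) →ₗ[k]
      (A × Module.Dual k A) →ₗ[k] (A × Module.Dual k A))
    (hBr : ∀ (a₁ a₂ a₃ : G), ∀ f₁ ∈ L.grading a₁, ∀ α₁ ∈ dualGrading L.grading a₁,
      ∀ f₂ ∈ L.grading a₂, ∀ α₂ ∈ dualGrading L.grading a₂,
      ∀ f₃ ∈ L.grading a₃, ∀ α₃ ∈ dualGrading L.grading a₃,
        Br (f₁, α₁) (f₂, α₂) (f₃, α₃) =
          (L.br f₁ f₂ f₃,
            ω f₁ f₂ f₃ + adStar f₁ f₂ α₃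
              + ρ (a₁ + a₂) a₃ • adStar f₃ f₁ α₂
              + ρ a₁ (a₂ + a₃) • adStar f₂ f₃ α₁)) :
    (∀ (a₁ a₂ b₁ b₂ b₃ : G),
      ∀ F₁ ∈ (L.grading a₁).prod (dualGrading L.grading a₁),
      ∀ F₂ ∈ (L.grading a₂).prod (dualGrading L.grading a₂),
      ∀ H₁ ∈ (L.grading b₁).prod (dualGrading L.grading b₁),
      ∀ H₂ ∈ (L.grading b₂).prod (dualGrading L.grading b₂),
      ∀ H₃ ∈ (L.grading b₃).prod (dualGrading L.grading b₃),
        Br (L.φ.prodMap L.φ.dualMap F₁) (L.φ.prodMap L.φ.dualMap F₂) (Br H₁ H₂ H₃) =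
          Br (Br F₁ F₂ H₁) (L.φ.prodMap L.φ.dualMap H₂) (L.φ.prodMap L.φ.dualMap H₃)
            + ρ (a₁ + a₂) b₁ •
              Br (L.φ.prodMap L.φ.dualMap H₁) (Br F₁ F₂ H₂)
                (L.φ.prodMap L.φ.dualMap H₃)
            + ρ (a₁ + a₂) (b₁ + b₂) •
              Br (L.φ.prodMap L.φ.dualMap H₁) (L.φ.prodMap L.φ.dualMap H₂)
                (Br F₁ F₂ H₃)) ↔
    (∀ (a₁ a₂ b₁ b₂ b₃ : G), ∀ f₁ ∈ L.grading a₁, ∀ f₂ ∈ L.grading a₂,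
      ∀ g₁ ∈ L.grading b₁, ∀ g₂ ∈ L.grading b₂, ∀ g₃ ∈ L.grading b₃,
        ω (L.φ f₁) (L.φ f₂) (L.br g₁ g₂ g₃)
            + adStar (L.φ f₁) (L.φ f₂) (ω g₁ g₂ g₃) =
          ω (L.br f₁ f₂ g₁) (L.φ g₂) (L.φ g₃)
            + ρ (a₁ + a₂) b₁ • ω (L.φ g₁) (L.br f₁ f₂ g₂) (L.φ g₃)
            + ρ (a₁ + a₂) (b₁ + b₂) • ω (L.φ g₁) (L.φ g₂) (L.br f₁ f₂ g₃)
            + (ρ (a₁ + a₂) (b₂ + b₃) * ρ b₁ (b₂ + b₃)) •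
              adStar (L.φ g₂) (L.φ g₃) (ω f₁ f₂ g₁)
            + (ρ (a₁ + a₂) (b₁ + b₃) * ρ (b₁ + b₂) b₃) •
              adStar (L.φ g₃) (L.φ g₁) (ω f₁ f₂ g₂)
            + ρ (a₁ + a₂) (b₁ + b₂) •
              adStar (L.φ g₁) (L.φ g₂) (ω f₁ f₂ g₃)) := by
  
  -- basic consequences of the two-cycle axioms
  have hne : ∀ x y : G, ρ x y ≠ 0 := by
    intro x y h
    have := hρ₁ x y
    rw [h, zero_mul] at this
    exact zero_ne_one this
  have hρ₂' : ∀ a b c : G, ρ a (b + c) = ρ a b * ρ a c := by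
    intro a b c
    have e1 := hρ₁ a (b + c)
    rw [hρ₂ b c a] at e1
    have e2 : (ρ a b * ρ a c) * (ρ b a * ρ c a) = 1 := by
      have h1 := hρ₁ a b
      have h2 := hρ₁ a c
      linear_combination (ρ a c * ρ c a) * h1 + h2
    exact mul_right_cancel₀ (mul_ne_zero (hne b a) (hne c a)) (e1.trans e2.symm)
  -- the master expansion lemma
  have main : ∀ (a₁ a₂ b₁ b₂ b₃ : G) (f₁ : A) (α₁ : Module.Dual k A),
      f₁ ∈ L.grading a₁ → α₁ ∈ dualGrading L.grading a₁ →
      ∀ (f₂ : A) (α₂ : Module.Dual k A),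
      f₂ ∈ L.grading a₂ → α₂ ∈ dualGrading L.grading a₂ →
      ∀ (g₁ : A) (γ₁ : Module.Dual k A),
      g₁ ∈ L.grading b₁ → γ₁ ∈ dualGrading L.grading b₁ →
      ∀ (g₂ : A) (γ₂ : Module.Dual k A),
      g₂ ∈ L.grading b₂ → γ₂ ∈ dualGrading L.grading b₂ →
      ∀ (g₃ : A) (γ₃ : Module.Dual k A),
      g₃ ∈ L.grading b₃ → γ₃ ∈ dualGrading L.grading b₃ →
      Br (L.φ.prodMap L.φ.dualMap (f₁, α₁)) (L.φ.prodMap L.φ.dualMap (f₂, α₂))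
          (Br (g₁, γ₁) (g₂, γ₂) (g₃, γ₃))
        - (Br (Br (f₁, α₁) (f₂, α₂) (g₁, γ₁)) (L.φ.prodMap L.φ.dualMap (g₂, γ₂))
              (L.φ.prodMap L.φ.dualMap (g₃, γ₃))
            + ρ (a₁ + a₂) b₁ •
              Br (L.φ.prodMap L.φ.dualMap (g₁, γ₁)) (Br (f₁, α₁) (f₂, α₂) (g₂, γ₂))
                (L.φ.prodMap L.φ.dualMap (g₃, γ₃))
            + ρ (a₁ + a₂) (b₁ + b₂) •
              Br (L.φ.prodMap L.φ.dualMap (g₁, γ₁)) (L.φ.prodMap L.φ.dualMap (g₂, γ₂))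
                (Br (f₁, α₁) (f₂, α₂) (g₃, γ₃))) =
      (0, (ω (L.φ f₁) (L.φ f₂) (L.br g₁ g₂ g₃)
            + adStar (L.φ f₁) (L.φ f₂) (ω g₁ g₂ g₃))
        - (ω (L.br f₁ f₂ g₁) (L.φ g₂) (L.φ g₃)
            + ρ (a₁ + a₂) b₁ • ω (L.φ g₁) (L.br f₁ f₂ g₂) (L.φ g₃)
            + ρ (a₁ + a₂) (b₁ + b₂) • ω (L.φ g₁) (L.φ g₂) (L.br f₁ f₂ g₃)
            + (ρ (a₁ + a₂) (b₂ + b₃) * ρ b₁ (b₂ + b₃)) •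
              adStar (L.φ g₂) (L.φ g₃) (ω f₁ f₂ g₁)
            + (ρ (a₁ + a₂) (b₁ + b₃) * ρ (b₁ + b₂) b₃) •
              adStar (L.φ g₃) (L.φ g₁) (ω f₁ f₂ g₂)
            + ρ (a₁ + a₂) (b₁ + b₂) •
              adStar (L.φ g₁) (L.φ g₂) (ω f₁ f₂ g₃))) := by
    intro a₁ a₂ b₁ b₂ b₃ f₁ α₁ hf₁ hα₁ f₂ α₂ hf₂ hα₂ g₁ γ₁ hg₁ hγ₁ g₂ γ₂ hg₂ hγ₂
      g₃ γ₃ hg₃ hγ₃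
    -- memberships of homogeneous building blocks
    have hpf₁ := L.φ_even a₁ f₁ hf₁
    have hpf₂ := L.φ_even a₂ f₂ hf₂
    have hpg₁ := L.φ_even b₁ g₁ hg₁
    have hpg₂ := L.φ_even b₂ g₂ hg₂
    have hpg₃ := L.φ_even b₃ g₃ hg₃
    have hbα₁ := hadRep.β_even a₁ α₁ hα₁
    have hbα₂ := hadRep.β_even a₂ α₂ hα₂
    have hbγ₁ := hadRep.β_even b₁ γ₁ hγ₁
    have hbγ₂ := hadRep.β_even b₂ γ₂ hγ₂
    have hbγ₃ := hadRep.β_even b₃ γ₃ hγ₃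
    have hbrG := L.br_deg b₁ b₂ b₃ g₁ hg₁ g₂ hg₂ g₃ hg₃
    have hbr1 := L.br_deg a₁ a₂ b₁ f₁ hf₁ f₂ hf₂ g₁ hg₁
    have hbr2 := L.br_deg a₁ a₂ b₂ f₁ hf₁ f₂ hf₂ g₂ hg₂
    have hbr3 := L.br_deg a₁ a₂ b₃ f₁ hf₁ f₂ hf₂ g₃ hg₃
    have tW2 : adStar g₃ g₁ γ₂ ∈ dualGrading L.grading (b₁ + b₂ + b₃) := by
      have := hadRep.μ_deg b₃ b₁ b₂ g₃ hg₃ g₁ hg₁ γ₂ hγ₂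
      rwa [show b₃ + b₁ + b₂ = b₁ + b₂ + b₃ from by abel] at this
    have tW1 : adStar g₂ g₃ γ₁ ∈ dualGrading L.grading (b₁ + b₂ + b₃) := by
      have := hadRep.μ_deg b₂ b₃ b₁ g₂ hg₂ g₃ hg₃ γ₁ hγ₁
      rwa [show b₂ + b₃ + b₁ = b₁ + b₂ + b₃ from by abel] at this
    have hW : ω g₁ g₂ g₃ + adStar g₁ g₂ γ₃ + ρ (b₁ + b₂) b₃ • adStar g₃ g₁ γ₂
        + ρ b₁ (b₂ + b₃) • adStar g₂ g₃ γ₁ ∈ dualGrading L.grading (b₁ + b₂ + b₃) :=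
      add_mem (add_mem (add_mem (hω_deg b₁ b₂ b₃ g₁ hg₁ g₂ hg₂ g₃ hg₃)
        (hadRep.μ_deg b₁ b₂ b₃ g₁ hg₁ g₂ hg₂ γ₃ hγ₃))
        (Submodule.smul_mem _ _ tW2)) (Submodule.smul_mem _ _ tW1)
    have t11 : adStar g₁ f₁ α₂ ∈ dualGrading L.grading (a₁ + a₂ + b₁) := by
      have := hadRep.μ_deg b₁ a₁ a₂ g₁ hg₁ f₁ hf₁ α₂ hα₂
      rwa [show b₁ + a₁ + a₂ = a₁ + a₂ + b₁ from by abel] at this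
    have t12 : adStar f₂ g₁ α₁ ∈ dualGrading L.grading (a₁ + a₂ + b₁) := by
      have := hadRep.μ_deg a₂ b₁ a₁ f₂ hf₂ g₁ hg₁ α₁ hα₁
      rwa [show a₂ + b₁ + a₁ = a₁ + a₂ + b₁ from by abel] at this
    have hW1 : ω f₁ f₂ g₁ + adStar f₁ f₂ γ₁ + ρ (a₁ + a₂) b₁ • adStar g₁ f₁ α₂
        + ρ a₁ (a₂ + b₁) • adStar f₂ g₁ α₁ ∈ dualGrading L.grading (a₁ + a₂ + b₁) :=
      add_mem (add_mem (add_mem (hω_deg a₁ a₂ b₁ f₁ hf₁ f₂ hf₂ g₁ hg₁)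
        (hadRep.μ_deg a₁ a₂ b₁ f₁ hf₁ f₂ hf₂ γ₁ hγ₁))
        (Submodule.smul_mem _ _ t11)) (Submodule.smul_mem _ _ t12)
    have t21 : adStar g₂ f₁ α₂ ∈ dualGrading L.grading (a₁ + a₂ + b₂) := by
      have := hadRep.μ_deg b₂ a₁ a₂ g₂ hg₂ f₁ hf₁ α₂ hα₂
      rwa [show b₂ + a₁ + a₂ = a₁ + a₂ + b₂ from by abel] at this
    have t22 : adStar f₂ g₂ α₁ ∈ dualGrading L.grading (a₁ + a₂ + b₂) := by
      have := hadRep.μ_deg a₂ b₂ a₁ f₂ hf₂ g₂ hg₂ α₁ hα₁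
      rwa [show a₂ + b₂ + a₁ = a₁ + a₂ + b₂ from by abel] at this
    have hW2 : ω f₁ f₂ g₂ + adStar f₁ f₂ γ₂ + ρ (a₁ + a₂) b₂ • adStar g₂ f₁ α₂
        + ρ a₁ (a₂ + b₂) • adStar f₂ g₂ α₁ ∈ dualGrading L.grading (a₁ + a₂ + b₂) :=
      add_mem (add_mem (add_mem (hω_deg a₁ a₂ b₂ f₁ hf₁ f₂ hf₂ g₂ hg₂)
        (hadRep.μ_deg a₁ a₂ b₂ f₁ hf₁ f₂ hf₂ γ₂ hγ₂))
        (Submodule.smul_mem _ _ t21)) (Submodule.smul_mem _ _ t22)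
    have t31 : adStar g₃ f₁ α₂ ∈ dualGrading L.grading (a₁ + a₂ + b₃) := by
      have := hadRep.μ_deg b₃ a₁ a₂ g₃ hg₃ f₁ hf₁ α₂ hα₂
      rwa [show b₃ + a₁ + a₂ = a₁ + a₂ + b₃ from by abel] at this
    have t32 : adStar f₂ g₃ α₁ ∈ dualGrading L.grading (a₁ + a₂ + b₃) := by
      have := hadRep.μ_deg a₂ b₃ a₁ f₂ hf₂ g₃ hg₃ α₁ hα₁
      rwa [show a₂ + b₃ + a₁ = a₁ + a₂ + b₃ from by abel] at this
    have hW3 : ω f₁ f₂ g₃ + adStar f₁ f₂ γ₃ + ρ (a₁ + a₂) b₃ • adStar g₃ f₁ α₂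
        + ρ a₁ (a₂ + b₃) • adStar f₂ g₃ α₁ ∈ dualGrading L.grading (a₁ + a₂ + b₃) :=
      add_mem (add_mem (add_mem (hω_deg a₁ a₂ b₃ f₁ hf₁ f₂ hf₂ g₃ hg₃)
        (hadRep.μ_deg a₁ a₂ b₃ f₁ hf₁ f₂ hf₂ γ₃ hγ₃))
        (Submodule.smul_mem _ _ t31)) (Submodule.smul_mem _ _ t32)
    simp only [LinearMap.prodMap_apply]
    rw [hBr b₁ b₂ b₃ g₁ hg₁ γ₁ hγ₁ g₂ hg₂ γ₂ hγ₂ g₃ hg₃ γ₃ hγ₃,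
      hBr a₁ a₂ b₁ f₁ hf₁ α₁ hα₁ f₂ hf₂ α₂ hα₂ g₁ hg₁ γ₁ hγ₁,
      hBr a₁ a₂ b₂ f₁ hf₁ α₁ hα₁ f₂ hf₂ α₂ hα₂ g₂ hg₂ γ₂ hγ₂,
      hBr a₁ a₂ b₃ f₁ hf₁ α₁ hα₁ f₂ hf₂ α₂ hα₂ g₃ hg₃ γ₃ hγ₃,
      hBr _ _ _ _ hpf₁ _ hbα₁ _ hpf₂ _ hbα₂ _ hbrG _ hW,
      hBr _ _ _ _ hbr1 _ hW1 _ hpg₂ _ hbγ₂ _ hpg₃ _ hbγ₃,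
      hBr _ _ _ _ hpg₁ _ hbγ₁ _ hbr2 _ hW2 _ hpg₃ _ hbγ₃,
      hBr _ _ _ _ hpg₁ _ hbγ₁ _ hpg₂ _ hbγ₂ _ hbr3 _ hW3]
    simp only [Prod.smul_mk, Prod.mk_add_mk, Prod.mk_sub_mk, Prod.mk.injEq]
    constructor
    · linear_combination (norm := module)
        L.fund a₁ a₂ b₁ b₂ b₃ f₁ hf₁ f₂ hf₂ g₁ hg₁ g₂ hg₂ g₃ hg₃
    · have h3 := hadRep.rep₄ a₁ a₂ b₁ b₂ b₃ f₁ hf₁ f₂ hf₂ g₁ hg₁ g₂ hg₂ γ₃ hγ₃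
      have h2 := hadRep.rep₄ a₁ a₂ b₃ b₁ b₂ f₁ hf₁ f₂ hf₂ g₃ hg₃ g₁ hg₁ γ₂ hγ₂
      have h1 := hadRep.rep₄ a₁ a₂ b₂ b₃ b₁ f₁ hf₁ f₂ hf₂ g₂ hg₂ g₃ hg₃ γ₁ hγ₁
      have h4 := hadRep.rep₂ b₁ b₂ b₃ a₁ a₂ g₁ hg₁ g₂ hg₂ g₃ hg₃ f₁ hf₁ α₂ hα₂
      have h5 := hadRep.rep₃ a₂ b₁ b₂ b₃ a₁ f₂ hf₂ g₁ hg₁ g₂ hg₂ g₃ hg₃ α₁ hα₁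
      have hq := hρ₁ (a₁ + a₂) (b₁ + b₂)
      have hq2 := hρ₁ (a₁ + a₂) b₁
      simp only [map_add, map_smul, smul_add, smul_smul]
      simp only [hρ₂, hρ₂'] at h1 h2 h3 h4 h5 hq hq2 ⊢
      linear_combination (norm := module)
        h3
        + (ρ b₁ b₃ * ρ b₂ b₃) • h2
        - (ρ b₁ b₃ * ρ b₂ b₃) •
            (hq • adStar (L.br f₁ f₂ g₃) (L.φ g₁) (L.φ.dualMap γ₂))
        + (ρ b₁ b₂ * ρ b₁ b₃) • h1
        - (ρ b₁ b₂ * ρ b₁ b₃) •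
            (hq2 • adStar (L.br f₁ f₂ g₂) (L.φ g₃) (L.φ.dualMap γ₁))
        - (ρ b₁ b₂ * ρ b₁ b₃ * ρ a₁ b₂ * ρ a₂ b₂) •
            (hq2 • adStar (L.φ g₂) (L.br f₁ f₂ g₃) (L.φ.dualMap γ₁))
        + (ρ a₁ b₁ * ρ a₁ b₂ * ρ a₁ b₃ * ρ a₂ b₁ * ρ a₂ b₂ * ρ a₂ b₃) • h4
        + (ρ a₁ a₂ * ρ a₁ b₁ * ρ a₁ b₂ * ρ a₁ b₃) • h5
  constructor
  · intro h a₁ a₂ b₁ b₂ b₃ f₁ hf₁ f₂ hf₂ g₁ hg₁ g₂ hg₂ g₃ hg₃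
    have hm := main a₁ a₂ b₁ b₂ b₃ f₁ 0 hf₁ (zero_mem _) f₂ 0 hf₂ (zero_mem _)
      g₁ 0 hg₁ (zero_mem _) g₂ 0 hg₂ (zero_mem _) g₃ 0 hg₃ (zero_mem _)
    have hh := h a₁ a₂ b₁ b₂ b₃ (f₁, 0) (Submodule.mem_prod.mpr ⟨hf₁, zero_mem _⟩)
      (f₂, 0) (Submodule.mem_prod.mpr ⟨hf₂, zero_mem _⟩)
      (g₁, 0) (Submodule.mem_prod.mpr ⟨hg₁, zero_mem _⟩)
      (g₂, 0) (Submodule.mem_prod.mpr ⟨hg₂, zero_mem _⟩)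
      (g₃, 0) (Submodule.mem_prod.mpr ⟨hg₃, zero_mem _⟩)
    rw [hh, sub_self] at hm
    have h2 := congrArg Prod.snd hm
    rw [← sub_eq_zero]
    exact h2.symm
  · intro hcoc a₁ a₂ b₁ b₂ b₃ F₁ hF₁ F₂ hF₂ H₁ hH₁ H₂ hH₂ H₃ hH₃
    obtain ⟨f₁, α₁⟩ := F₁
    obtain ⟨f₂, α₂⟩ := F₂
    obtain ⟨g₁, γ₁⟩ := H₁
    obtain ⟨g₂, γ₂⟩ := H₂
    obtain ⟨g₃, γ₃⟩ := H₃
    rw [Submodule.mem_prod] at hF₁ hF₂ hH₁ hH₂ hH₃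
    have hm := main a₁ a₂ b₁ b₂ b₃ f₁ α₁ hF₁.1 hF₁.2 f₂ α₂ hF₂.1 hF₂.2
      g₁ γ₁ hH₁.1 hH₁.2 g₂ γ₂ hH₂.1 hH₂.2 g₃ γ₃ hH₃.1 hH₃.2
    have hc := hcoc a₁ a₂ b₁ b₂ b₃ f₁ hF₁.1 f₂ hF₂.1 g₁ hH₁.1 g₂ hH₂.1 g₃ hH₃.1
    rw [← sub_eq_zero, hm, sub_eq_zero.mpr hc, Prod.mk_zero_zero]
end

section
/- Let 0 → V →i B →p A → 0 be an abelian extension of multiplicative 3-Hom-ρ-Lie algebras (A,φ), (V,φ_V), (B,ψ), let δ : A → B be a section of p, and define μ : ∧²A → End(V) by μ(f₁,f₂)(u) = [δ(f₁), δ(f₂), u]_B. Then (V, μ, φ_V) is a representation of (A,φ) (with β = φ_V), i.e. μ satisfies the representation conditions (R1)–(R4). -/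
section TwoCycle

variable {k G : Type*} [Field k] {ρ : G → G → k}

theorem rho_ne_zero (hρ₁ : ∀ a b : G, ρ a b * ρ b a = 1) (a b : G) : ρ a b ≠ 0 :=
  left_ne_zero_of_mul_eq_one (hρ₁ a b)

theorem rho_swap (hρ₁ : ∀ a b : G, ρ a b * ρ b a = 1) (a b : G) : ρ b a = (ρ a b)⁻¹ :=
  eq_inv_of_mul_eq_one_right (hρ₁ a b)

theorem rho_add_right [AddCommGroup G] (hρ₁ : ∀ a b : G, ρ a b * ρ b a = 1)
    (hρ₂ : ∀ a b c : G, ρ (a + b) c = ρ a c * ρ b c) (a b c : G) :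
    ρ a (b + c) = ρ a b * ρ a c := by
  rw [rho_swap hρ₁ (b + c), hρ₂, rho_swap hρ₁ a b, rho_swap hρ₁ a c, mul_inv, inv_inv, inv_inv]

end TwoCycle

namespace ThreeHomRhoLie

variable {k G A : Type*} [Field k] [AddCommGroup G] [DecidableEq G]
    [AddCommGroup A] [Module k A] {ρ : G → G → k} (L : ThreeHomRhoLie k G A ρ)

@[elab_as_elim]
theorem induction_on {P : A → Prop} (x : A) (zero : P 0)
    (add : ∀ x y, P x → P y → P (x + y)) (mem : ∀ a, ∀ x ∈ L.grading a, P x) : P x :=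
  Submodule.iSup_induction L.grading (motive := P)
    (L.isInternal.submodule_iSup_eq_top ▸ Submodule.mem_top) mem zero add

theorem br_left_eq_zero_of_br_middle_eq_zero {a : G} {u w : A} (hu : u ∈ L.grading a)
    (h : ∀ x, L.br x u w = 0) (x : A) : L.br u x w = 0 :=
  L.induction_on x (by simp) (fun x y hx hy => by simp [hx, hy]) fun b x hx => by
    rw [L.skew₁₂ a b u hu x hx, h, smul_zero]

theorem br_rotate (hρ₂ : ∀ a b c : G, ρ (a + b) c = ρ a c * ρ b c) {a b c : G}
    {x y z : A} (hx : x ∈ L.grading a) (hy : y ∈ L.grading b) (hz : z ∈ L.grading c) :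
    L.br x y z = ρ (a + b) c • L.br z x y := by
  rw [L.skew₂₃ b c y hy z hz, L.skew₁₂ a c x hx z hz, smul_smul, neg_mul_neg, hρ₂, mul_comm]

theorem fund_left (hρ₁ : ∀ a b : G, ρ a b * ρ b a = 1)
    (hρ₂ : ∀ a b c : G, ρ (a + b) c = ρ a c * ρ b c) {b₁ b₂ b₃ c d : G}
    {y₁ y₂ y₃ x w : A} (hy₁ : y₁ ∈ L.grading b₁) (hy₂ : y₂ ∈ L.grading b₂)
    (hy₃ : y₃ ∈ L.grading b₃) (hx : x ∈ L.grading c) (hw : w ∈ L.grading d) :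
    L.br (L.br y₁ y₂ y₃) (L.φ x) (L.φ w) =
      L.br (L.φ y₁) (L.φ y₂) (L.br y₃ x w)
        + ρ b₁ (b₂ + b₃) • L.br (L.φ y₂) (L.φ y₃) (L.br y₁ x w)
        + ρ (b₁ + b₂) b₃ • L.br (L.φ y₃) (L.φ y₁) (L.br y₂ x w) := by
  have hY := L.br_deg _ _ _ _ hy₁ _ hy₂ _ hy₃
  have hφx := L.φ_even _ _ hx
  have hφw := L.φ_even _ _ hw
  have hφ₁ := L.φ_even _ _ hy₁
  have hφ₂ := L.φ_even _ _ hy₂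
  have hφ₃ := L.φ_even _ _ hy₃
  have hZ₁ := L.br_deg _ _ _ _ hy₁ _ hx _ hw
  have hZ₂ := L.br_deg _ _ _ _ hy₂ _ hx _ hw
  rw [L.br_rotate hρ₂ hY hφx hφw, L.br_rotate hρ₂ hφw hY hφx,
    L.fund _ _ _ _ _ _ hx _ hw _ hy₁ _ hy₂ _ hy₃,
    L.br_rotate hρ₂ hx hw hy₁, L.br_rotate hρ₂ hx hw hy₂, L.br_rotate hρ₂ hx hw hy₃]
  simp only [map_smul, LinearMap.smul_apply]
  rw [L.br_rotate hρ₂ hZ₁ hφ₂ hφ₃, L.br_rotate hρ₂ hφ₃ hZ₁ hφ₂, L.br_rotate hρ₂ hφ₁ hZ₂ hφ₃]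
  -- once each `ρ b a` is written as `(ρ a b)⁻¹`, the coefficients are Laurent monomials
  match_scalars <;>
  · simp only [hρ₂, rho_add_right hρ₁ hρ₂, rho_swap hρ₁ c d, rho_swap hρ₁ b₁ c,
      rho_swap hρ₁ b₂ c, rho_swap hρ₁ b₃ c, rho_swap hρ₁ b₁ d, rho_swap hρ₁ b₂ d,
      rho_swap hρ₁ b₃ d, rho_swap hρ₁ b₂ b₃]
    field_simp [rho_ne_zero hρ₁]

theorem fund_middle (hρ₁ : ∀ a b : G, ρ a b * ρ b a = 1)
    (hρ₂ : ∀ a b c : G, ρ (a + b) c = ρ a c * ρ b c) {c a₁ a₂ a₃ d : G}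
    {y x₁ x₂ x₃ w : A} (hy : y ∈ L.grading c) (hx₁ : x₁ ∈ L.grading a₁)
    (hx₂ : x₂ ∈ L.grading a₂) (hx₃ : x₃ ∈ L.grading a₃) (hw : w ∈ L.grading d) :
    L.br (L.φ y) (L.br x₁ x₂ x₃) (L.φ w) =
      ρ c (a₁ + a₂) • L.br (L.φ x₁) (L.φ x₂) (L.br y x₃ w)
        + (ρ c (a₂ + a₃) * ρ a₁ (a₂ + a₃)) • L.br (L.φ x₂) (L.φ x₃) (L.br y x₁ w)
        + (ρ c (a₁ + a₃) * ρ (a₁ + a₂) a₃) • L.br (L.φ x₃) (L.φ x₁) (L.br y x₂ w) := by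
  have hX := L.br_deg _ _ _ _ hx₁ _ hx₂ _ hx₃
  have hφw := L.φ_even _ _ hw
  have hφ₁ := L.φ_even _ _ hx₁
  have hφ₂ := L.φ_even _ _ hx₂
  have hφ₃ := L.φ_even _ _ hx₃
  have hZ₁ := L.br_deg _ _ _ _ hy _ hx₁ _ hw
  have hZ₂ := L.br_deg _ _ _ _ hy _ hx₂ _ hw
  rw [L.skew₂₃ _ _ _ hX _ hφw, L.fund _ _ _ _ _ _ hy _ hw _ hx₁ _ hx₂ _ hx₃,
    L.skew₂₃ _ _ _ hw _ hx₁, L.skew₂₃ _ _ _ hw _ hx₂, L.skew₂₃ _ _ _ hw _ hx₃]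
  simp only [map_smul, LinearMap.smul_apply]
  rw [L.br_rotate hρ₂ hZ₁ hφ₂ hφ₃, L.br_rotate hρ₂ hφ₃ hZ₁ hφ₂, L.br_rotate hρ₂ hφ₁ hZ₂ hφ₃]
  match_scalars <;>
  · simp only [hρ₂, rho_add_right hρ₁ hρ₂, rho_swap hρ₁ a₁ c, rho_swap hρ₁ a₂ c,
      rho_swap hρ₁ a₃ c, rho_swap hρ₁ a₁ d, rho_swap hρ₁ a₂ d, rho_swap hρ₁ a₃ d,
      rho_swap hρ₁ a₂ a₃]
    field_simp [rho_ne_zero hρ₁]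

end ThreeHomRhoLie

section Extension

variable {k G V B A : Type*} [Field k] [AddCommGroup G] [DecidableEq G]
    [AddCommGroup V] [Module k V] [AddCommGroup B] [Module k B] [AddCommGroup A] [Module k A]
    {ρ : G → G → k} {LV : ThreeHomRhoLie k G V ρ} {LB : ThreeHomRhoLie k G B ρ}
    {LA : ThreeHomRhoLie k G A ρ} {i : V →ₗ[k] B} {p : B →ₗ[k] A}

theorem br_incl_left_eq_zero (hi_deg : ∀ a : G, ∀ v ∈ LV.grading a, i v ∈ LB.grading a)
    (habelian : ∀ b : B, ∀ u v : V, LB.br b (i u) (i v) = 0) (u : V) (x : B) (v : V) :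
    LB.br (i u) x (i v) = 0 := by
  induction u using LV.induction_on generalizing x with
  | zero => simp
  | add u₁ u₂ h₁ h₂ => simp [h₁, h₂]
  | mem a u hu =>
    exact LB.br_left_eq_zero_of_br_middle_eq_zero (hi_deg a u hu) (habelian · u v) x

theorem br_add_incl_add_incl (hi_deg : ∀ a : G, ∀ v ∈ LV.grading a, i v ∈ LB.grading a)
    (habelian : ∀ b : B, ∀ u v : V, LB.br b (i u) (i v) = 0) (x y : B) (u₁ u₂ v : V) :
    LB.br (x + i u₁) (y + i u₂) (i v) = LB.br x y (i v) := by
  simp only [map_add, LinearMap.add_apply, habelian, br_incl_left_eq_zero hi_deg habelian,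
    add_zero]

theorem br_section_proj_eq (hi_deg : ∀ a : G, ∀ v ∈ LV.grading a, i v ∈ LB.grading a)
    (habelian : ∀ b : B, ∀ u v : V, LB.br b (i u) (i v) = 0)
    (hexact : LinearMap.range i = LinearMap.ker p) {δ : A →ₗ[k] B}
    (hδ : p ∘ₗ δ = LinearMap.id) (x y : B) (v : V) :
    LB.br (δ (p x)) (δ (p y)) (i v) = LB.br x y (i v) := by
  have lift (x : B) : ∃ u, δ (p x) = x + i u := by
    obtain ⟨u, hu⟩ : δ (p x) - x ∈ LinearMap.range i := by
      rw [hexact, LinearMap.mem_ker, map_sub, ← LinearMap.comp_apply, hδ, LinearMap.id_apply,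
        sub_self]
    exact ⟨u, by rw [hu, add_sub_cancel]⟩
  obtain ⟨u₁, h₁⟩ := lift x
  obtain ⟨u₂, h₂⟩ := lift y
  rw [h₁, h₂, br_add_incl_add_incl hi_deg habelian]

theorem IsRhoRep.of_pullback (hρ₁ : ∀ a b : G, ρ a b * ρ b a = 1)
    (hρ₂ : ∀ a b c : G, ρ (a + b) c = ρ a c * ρ b c) (hi : Function.Injective i)
    (hi_φ : i ∘ₗ LV.φ = LB.φ ∘ₗ i) (hi_deg : ∀ a : G, ∀ v ∈ LV.grading a, i v ∈ LB.grading a)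
    (hi_reflect : ∀ (a : G) (v : V), i v ∈ LB.grading a → v ∈ LV.grading a)
    (hp_br : ∀ x y z : B, p (LB.br x y z) = LA.br (p x) (p y) (p z))
    (hp_φ : p ∘ₗ LB.φ = LA.φ ∘ₗ p)
    (hp_surj_deg : ∀ a : G, ∀ f ∈ LA.grading a, ∃ b ∈ LB.grading a, p b = f)
    {μ : A →ₗ[k] A →ₗ[k] Module.End k V}
    (hμ : ∀ (x y : B) (u : V), i (μ (p x) (p y) u) = LB.br x y (i u)) :
    IsRhoRep LA LV.grading LV.φ μ := by
  have hiφ (v : V) : i (LV.φ v) = LB.φ (i v) := LinearMap.congr_fun hi_φ v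
  have hpφ (x : B) : LA.φ (p x) = p (LB.φ x) := (LinearMap.congr_fun hp_φ x).symm
  have hpbr (x y z : B) : LA.br (p x) (p y) (p z) = p (LB.br x y z) := (hp_br x y z).symm
  refine ⟨LV.φ_even, ?deg, ?skew, ?rep₁, ?rep₂, ?rep₃, ?rep₄⟩
  case deg =>
    intro a b c f hf g hg v hv
    obtain ⟨x, hx, rfl⟩ := hp_surj_deg a f hf
    obtain ⟨y, hy, rfl⟩ := hp_surj_deg b g hg
    exact hi_reflect _ _ (hμ x y v ▸ LB.br_deg a b c x hx y hy _ (hi_deg c v hv))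
  case skew =>
    intro a b c f hf g hg v hv
    obtain ⟨x, hx, rfl⟩ := hp_surj_deg a f hf
    obtain ⟨y, hy, rfl⟩ := hp_surj_deg b g hg
    apply hi
    rw [map_smul, hμ, hμ]
    exact LB.skew₁₂ a b x hx y hy (i v)
  case rep₁ =>
    intro a₁ a₂ b₁ b₂ c f₁ hf₁ f₂ hf₂ g₁ hg₁ g₂ hg₂ v hv
    obtain ⟨x₁, hx₁, rfl⟩ := hp_surj_deg a₁ f₁ hf₁
    obtain ⟨x₂, hx₂, rfl⟩ := hp_surj_deg a₂ f₂ hf₂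
    obtain ⟨y₁, hy₁, rfl⟩ := hp_surj_deg b₁ g₁ hg₁
    obtain ⟨y₂, hy₂, rfl⟩ := hp_surj_deg b₂ g₂ hg₂
    apply hi
    simp only [hpφ, hpbr, map_add, map_sub, map_smul, hμ, hiφ]
    rw [LB.fund _ _ _ _ _ _ hx₁ _ hx₂ _ hy₁ _ hy₂ _ (hi_deg c v hv)]
    abel
  case rep₂ =>
    intro b₁ b₂ b₃ c d g₁ hg₁ g₂ hg₂ g₃ hg₃ f hf v hv
    obtain ⟨y₁, hy₁, rfl⟩ := hp_surj_deg b₁ g₁ hg₁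
    obtain ⟨y₂, hy₂, rfl⟩ := hp_surj_deg b₂ g₂ hg₂
    obtain ⟨y₃, hy₃, rfl⟩ := hp_surj_deg b₃ g₃ hg₃
    obtain ⟨x, hx, rfl⟩ := hp_surj_deg c f hf
    apply hi
    simp only [hpφ, hpbr, map_add, map_smul, hμ, hiφ]
    exact LB.fund_left hρ₁ hρ₂ hy₁ hy₂ hy₃ hx (hi_deg d v hv)
  case rep₃ =>
    intro c a₁ a₂ a₃ d g hg f₁ hf₁ f₂ hf₂ f₃ hf₃ v hv
    obtain ⟨y, hy, rfl⟩ := hp_surj_deg c g hg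
    obtain ⟨x₁, hx₁, rfl⟩ := hp_surj_deg a₁ f₁ hf₁
    obtain ⟨x₂, hx₂, rfl⟩ := hp_surj_deg a₂ f₂ hf₂
    obtain ⟨x₃, hx₃, rfl⟩ := hp_surj_deg a₃ f₃ hf₃
    apply hi
    simp only [hpφ, hpbr, map_add, map_smul, hμ, hiφ]
    exact LB.fund_middle hρ₁ hρ₂ hy hx₁ hx₂ hx₃ (hi_deg d v hv)
  case rep₄ =>
    intro a₁ a₂ b₁ b₂ c f₁ hf₁ f₂ hf₂ g₁ hg₁ g₂ hg₂ v hv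
    obtain ⟨x₁, hx₁, rfl⟩ := hp_surj_deg a₁ f₁ hf₁
    obtain ⟨x₂, hx₂, rfl⟩ := hp_surj_deg a₂ f₂ hf₂
    obtain ⟨y₁, hy₁, rfl⟩ := hp_surj_deg b₁ g₁ hg₁
    obtain ⟨y₂, hy₂, rfl⟩ := hp_surj_deg b₂ g₂ hg₂
    apply hi
    simp only [hpφ, hpbr, map_add, map_smul, hμ, hiφ]
    rw [LB.fund _ _ _ _ _ _ hx₁ _ hx₂ _ hy₁ _ hy₂ _ (hi_deg c v hv)]
    abel

end Extension

theorem abelian_extension_isRep_general {k G V B A : Type*} [Field k]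
    [AddCommGroup G] [DecidableEq G] [AddCommGroup V] [Module k V]
    [AddCommGroup B] [Module k B] [AddCommGroup A] [Module k A]
    (ρ : G → G → k)
    (hρ₁ : ∀ a b : G, ρ a b * ρ b a = 1)
    (hρ₂ : ∀ a b c : G, ρ (a + b) c = ρ a c * ρ b c)
    (LV : ThreeHomRhoLie k G V ρ) (LB : ThreeHomRhoLie k G B ρ)
    (LA : ThreeHomRhoLie k G A ρ)
    (i : V →ₗ[k] B) (p : B →ₗ[k] A)
    (hi_φ : i ∘ₗ LV.φ = LB.φ ∘ₗ i)
    (hi_deg : ∀ a : G, ∀ v ∈ LV.grading a, i v ∈ LB.grading a)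
    (hi_reflect : ∀ (a : G) (v : V), i v ∈ LB.grading a → v ∈ LV.grading a)
    (hp_br : ∀ x y z : B, p (LB.br x y z) = LA.br (p x) (p y) (p z))
    (hp_φ : p ∘ₗ LB.φ = LA.φ ∘ₗ p)
    (hp_surj_deg : ∀ a : G, ∀ f ∈ LA.grading a, ∃ b ∈ LB.grading a, p b = f)
    (hexact : LinearMap.range i = LinearMap.ker p)
    (hinj : LinearMap.ker i = ⊥)
    (habelian : ∀ b : B, ∀ u v : V, LB.br b (i u) (i v) = 0)
    (δ : A →ₗ[k] B) (hδ : p ∘ₗ δ = LinearMap.id)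
    (μ : A →ₗ[k] A →ₗ[k] Module.End k V)
    (hμ : ∀ (f₁ f₂ : A) (u : V), i (μ f₁ f₂ u) = LB.br (δ f₁) (δ f₂) (i u))
    : IsRhoRep LA LV.grading LV.φ μ :=
  IsRhoRep.of_pullback hρ₁ hρ₂ (LinearMap.ker_eq_bot.mp hinj) hi_φ hi_deg hi_reflect hp_br hp_φ
    hp_surj_deg fun x y u => (hμ _ _ u).trans (br_section_proj_eq hi_deg habelian hexact hδ x y u)

/-- For an abelian extension `0 → V → B → A → 0` of multiplicative
`3`-Hom-`ρ`-Lie algebras with section `δ`, the map `μ(f₁,f₂)(u) = [δ f₁, δ f₂, u]_B`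
makes `(V, μ, φ_V)` a representation of `(A, φ)`. -/
theorem abelian_extension_isRep {k G V B A : Type*} [Field k]
    [AddCommGroup G] [DecidableEq G] [AddCommGroup V] [Module k V]
    [AddCommGroup B] [Module k B] [AddCommGroup A] [Module k A]
    (ρ : G → G → k)
    (hρ₁ : ∀ a b : G, ρ a b * ρ b a = 1)
    (hρ₂ : ∀ a b c : G, ρ (a + b) c = ρ a c * ρ b c)
    (LV : ThreeHomRhoLie k G V ρ) (LB : ThreeHomRhoLie k G B ρ)
    (LA : ThreeHomRhoLie k G A ρ)
    (hmulV : ∀ f g h : V, LV.φ (LV.br f g h) = LV.br (LV.φ f) (LV.φ g) (LV.φ h))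
    (hmulB : ∀ f g h : B, LB.φ (LB.br f g h) = LB.br (LB.φ f) (LB.φ g) (LB.φ h))
    (hmulA : ∀ f g h : A, LA.φ (LA.br f g h) = LA.br (LA.φ f) (LA.φ g) (LA.φ h))
    (i : V →ₗ[k] B) (p : B →ₗ[k] A)
    (hi_br : ∀ u v w : V, i (LV.br u v w) = LB.br (i u) (i v) (i w))
    (hi_φ : i ∘ₗ LV.φ = LB.φ ∘ₗ i)
    (hi_deg : ∀ a : G, ∀ v ∈ LV.grading a, i v ∈ LB.grading a)
    (hi_reflect : ∀ (a : G) (v : V), i v ∈ LB.grading a → v ∈ LV.grading a)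
    (hp_br : ∀ x y z : B, p (LB.br x y z) = LA.br (p x) (p y) (p z))
    (hp_φ : p ∘ₗ LB.φ = LA.φ ∘ₗ p)
    (hp_deg : ∀ a : G, ∀ b ∈ LB.grading a, p b ∈ LA.grading a)
    (hp_surj_deg : ∀ a : G, ∀ f ∈ LA.grading a, ∃ b ∈ LB.grading a, p b = f)
    (hexact : LinearMap.range i = LinearMap.ker p)
    (hinj : LinearMap.ker i = ⊥)
    (hsurj : LinearMap.range p = ⊤)
    (hφV : (LinearMap.range i).map LB.φ = (LinearMap.range LV.φ).map i)
    (habelian : ∀ b : B, ∀ u v : V, LB.br b (i u) (i v) = 0)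
    (δ : A →ₗ[k] B) (hδ : p ∘ₗ δ = LinearMap.id) (hδφ : δ ∘ₗ LA.φ = LB.φ ∘ₗ δ)
    (μ : A →ₗ[k] A →ₗ[k] Module.End k V)
    (hμ : ∀ (f₁ f₂ : A) (u : V), i (μ f₁ f₂ u) = LB.br (δ f₁) (δ f₂) (i u))
    : IsRhoRep LA LV.grading LV.φ μ :=
  abelian_extension_isRep_general ρ hρ₁ hρ₂ LV LB LA i p hi_φ hi_deg hi_reflect hp_br hp_φ
    hp_surj_deg hexact hinj habelian δ hδ μ hμ
end

section
/- Let 0 → V →i B →p A → 0 and 0 → V →j B̃ →q A → 0 be two equivalent abelian extensions of multiplicative 3-Hom-ρ-Lie algebras, with equivalence given by a 3-Hom-ρ-Lie algebra morphism F : B → B̃ satisfying F∘i = j and q∘F = p. Let δ be a section of p and δ′ a section of q. Then the induced representations coincide: [δ(f₁), δ(f₂), u]_B = [δ′(f₁), δ′(f₂), u]_{B̃} for all homogeneous f₁,f₂ ∈ A and u ∈ V. -/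
theorem LinearMap.eq_zero_of_iSup_eq_top {ι R M N : Type*} [Semiring R] [AddCommMonoid M]
    [Module R M] [AddCommMonoid N] [Module R N] {p : ι → Submodule R M} (hp : iSup p = ⊤)
    {T : M →ₗ[R] N} (hT : ∀ i, ∀ x ∈ p i, T x = 0) : T = 0 :=
  LinearMap.ker_eq_top.mp <| top_le_iff.mp <| hp ▸ iSup_le fun i x hx => hT i x hx

theorem LinearMap.exists_eq_add_of_range_eq_ker {R U M N : Type*} [Ring R] [AddCommGroup U]
    [Module R U] [AddCommGroup M] [Module R M] [AddCommGroup N] [Module R N]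
    {j : U →ₗ[R] M} {q : M →ₗ[R] N} (hexact : LinearMap.range j = LinearMap.ker q) {x y : M}
    (h : q x = q y) : ∃ u, x = y + j u := by
  have hxy : x - y ∈ LinearMap.ker q := by simp [h]
  rw [← hexact] at hxy
  obtain ⟨u, hu⟩ := hxy
  exact ⟨u, by rw [hu]; abel⟩

namespace ThreeHomRhoLie

variable {k G V A : Type*} [Field k] [AddCommGroup G] [DecidableEq G]
  [AddCommGroup V] [Module k V] [AddCommGroup A] [Module k A] {ρ : G → G → k}

theorem br_eq_zero_of_forall_br_left_eq_zero (L : ThreeHomRhoLie k G A ρ) {c : G} {x y : A}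
    (hx : x ∈ L.grading c) (hxy : ∀ b, L.br b x y = 0) (b : A) : L.br x b y = 0 := by
  have : (L.br x).flip y = 0 :=
    LinearMap.eq_zero_of_iSup_eq_top L.isInternal.submodule_iSup_eq_top fun d b hb => by
      rw [LinearMap.flip_apply, L.skew₁₂ c d x hx b hb, hxy, smul_zero]
  simpa using LinearMap.congr_fun this b

theorem br_map_eq_zero_of_forall_br_map_eq_zero (LV : ThreeHomRhoLie k G V ρ)
    (L : ThreeHomRhoLie k G A ρ) {j : V →ₗ[k] A}
    (hj_deg : ∀ a : G, ∀ v ∈ LV.grading a, j v ∈ L.grading a) {y : A}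
    (hy : ∀ b v, L.br b (j v) y = 0) (v : V) (b : A) : L.br (j v) b y = 0 := by
  have : ((L.br ∘ₗ j).flip b).flip y = 0 :=
    LinearMap.eq_zero_of_iSup_eq_top LV.isInternal.submodule_iSup_eq_top fun a v hv => by
      simpa using br_eq_zero_of_forall_br_left_eq_zero L (hj_deg a v hv) (fun b => hy b v) b
  simpa using LinearMap.congr_fun this v

end ThreeHomRhoLie

theorem equivalent_extensions_same_rep_general {k G V B B' A : Type*} [Field k]
    [AddCommGroup G] [DecidableEq G] [AddCommGroup V] [Module k V]
    [AddCommGroup B] [Module k B] [AddCommGroup B'] [Module k B']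
    [AddCommGroup A] [Module k A]
    (ρ : G → G → k)
    (LV : ThreeHomRhoLie k G V ρ) (LB : ThreeHomRhoLie k G B ρ)
    (LB' : ThreeHomRhoLie k G B' ρ) (LA : ThreeHomRhoLie k G A ρ)
    -- the first extension 0 → V →i B →p A → 0
    (i : V →ₗ[k] B) (p : B →ₗ[k] A)
    -- the second extension 0 → V →j B' →q A → 0
    (j : V →ₗ[k] B') (q : B' →ₗ[k] A)
    (hj_deg : ∀ a : G, ∀ v ∈ LV.grading a, j v ∈ LB'.grading a)
    (hexact' : LinearMap.range j = LinearMap.ker q)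
    (habelian' : ∀ b : B', ∀ u v : V, LB'.br b (j u) (j v) = 0)
    -- the equivalence F : B → B'
    (F : B →ₗ[k] B')
    (hF_br : ∀ x y z : B, F (LB.br x y z) = LB'.br (F x) (F y) (F z))
    (hFi : F ∘ₗ i = j) (hqF : q ∘ₗ F = p)
    -- the sections
    (δ : A →ₗ[k] B) (hδ : p ∘ₗ δ = LinearMap.id)
    (δ' : A →ₗ[k] B') (hδ' : q ∘ₗ δ' = LinearMap.id) :
    ∀ (a₁ a₂ : G), ∀ f₁ ∈ LA.grading a₁, ∀ f₂ ∈ LA.grading a₂, ∀ u : V,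
      F (LB.br (δ f₁) (δ f₂) (i u)) = LB'.br (δ' f₁) (δ' f₂) (j u) := by
  intro _ _ f₁ _ f₂ _ u
  have hFi' : ∀ v, F (i v) = j v := fun v => LinearMap.congr_fun hFi v
  have hF_δ : ∀ f, ∃ v, F (δ f) = δ' f + j v := fun f =>
    LinearMap.exists_eq_add_of_range_eq_ker hexact' <| by
      rw [← LinearMap.comp_apply, hqF, ← LinearMap.comp_apply, ← LinearMap.comp_apply, hδ, hδ']
  have hV_left : ∀ v b, LB'.br (j v) b (j u) = 0 :=
    ThreeHomRhoLie.br_map_eq_zero_of_forall_br_map_eq_zero LV LB' hj_deg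
      (fun b v => habelian' b v u)
  obtain ⟨v₁, hv₁⟩ := hF_δ f₁
  obtain ⟨v₂, hv₂⟩ := hF_δ f₂
  rw [hF_br, hFi', hv₁, hv₂]
  simp only [map_add, LinearMap.add_apply, habelian', hV_left, add_zero]

/-- Two equivalent abelian extensions of a multiplicative
`3`-Hom-`ρ`-Lie algebra `A` by `V` induce the same representation: for any sections
`δ` of `p` and `δ'` of `q`, one has `[δ f₁, δ f₂, u]_B = [δ' f₁, δ' f₂, u]_{B̃}`
(the left-hand side being transported to `B̃` by the equivalence `F`). -/
theorem equivalent_extensions_same_rep {k G V B B' A : Type*} [Field k]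
    [AddCommGroup G] [DecidableEq G] [AddCommGroup V] [Module k V]
    [AddCommGroup B] [Module k B] [AddCommGroup B'] [Module k B']
    [AddCommGroup A] [Module k A]
    (ρ : G → G → k)
    (hρ₁ : ∀ a b : G, ρ a b * ρ b a = 1)
    (hρ₂ : ∀ a b c : G, ρ (a + b) c = ρ a c * ρ b c)
    (LV : ThreeHomRhoLie k G V ρ) (LB : ThreeHomRhoLie k G B ρ)
    (LB' : ThreeHomRhoLie k G B' ρ) (LA : ThreeHomRhoLie k G A ρ)
    (hmulV : ∀ f g h : V, LV.φ (LV.br f g h) = LV.br (LV.φ f) (LV.φ g) (LV.φ h))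
    (hmulB : ∀ f g h : B, LB.φ (LB.br f g h) = LB.br (LB.φ f) (LB.φ g) (LB.φ h))
    (hmulB' : ∀ f g h : B', LB'.φ (LB'.br f g h) = LB'.br (LB'.φ f) (LB'.φ g) (LB'.φ h))
    (hmulA : ∀ f g h : A, LA.φ (LA.br f g h) = LA.br (LA.φ f) (LA.φ g) (LA.φ h))
    -- the first extension 0 → V →i B →p A → 0
    (i : V →ₗ[k] B) (p : B →ₗ[k] A)
    (hi_br : ∀ u v w : V, i (LV.br u v w) = LB.br (i u) (i v) (i w))
    (hi_φ : i ∘ₗ LV.φ = LB.φ ∘ₗ i)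
    (hi_deg : ∀ a : G, ∀ v ∈ LV.grading a, i v ∈ LB.grading a)
    (hp_br : ∀ x y z : B, p (LB.br x y z) = LA.br (p x) (p y) (p z))
    (hp_φ : p ∘ₗ LB.φ = LA.φ ∘ₗ p)
    (hp_deg : ∀ a : G, ∀ b ∈ LB.grading a, p b ∈ LA.grading a)
    (hexact : LinearMap.range i = LinearMap.ker p)
    (hinj : LinearMap.ker i = ⊥)
    (hsurj : LinearMap.range p = ⊤)
    (habelian : ∀ b : B, ∀ u v : V, LB.br b (i u) (i v) = 0)
    -- the second extension 0 → V →j B' →q A → 0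
    (j : V →ₗ[k] B') (q : B' →ₗ[k] A)
    (hj_br : ∀ u v w : V, j (LV.br u v w) = LB'.br (j u) (j v) (j w))
    (hj_φ : j ∘ₗ LV.φ = LB'.φ ∘ₗ j)
    (hj_deg : ∀ a : G, ∀ v ∈ LV.grading a, j v ∈ LB'.grading a)
    (hq_br : ∀ x y z : B', q (LB'.br x y z) = LA.br (q x) (q y) (q z))
    (hq_φ : q ∘ₗ LB'.φ = LA.φ ∘ₗ q)
    (hq_deg : ∀ a : G, ∀ b ∈ LB'.grading a, q b ∈ LA.grading a)
    (hexact' : LinearMap.range j = LinearMap.ker q)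
    (hinj' : LinearMap.ker j = ⊥)
    (hsurj' : LinearMap.range q = ⊤)
    (habelian' : ∀ b : B', ∀ u v : V, LB'.br b (j u) (j v) = 0)
    -- the equivalence F : B → B'
    (F : B →ₗ[k] B')
    (hF_br : ∀ x y z : B, F (LB.br x y z) = LB'.br (F x) (F y) (F z))
    (hF_φ : F ∘ₗ LB.φ = LB'.φ ∘ₗ F)
    (hFi : F ∘ₗ i = j) (hqF : q ∘ₗ F = p)
    -- the sections
    (δ : A →ₗ[k] B) (hδ : p ∘ₗ δ = LinearMap.id) (hδφ : δ ∘ₗ LA.φ = LB.φ ∘ₗ δ)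
    (δ' : A →ₗ[k] B') (hδ' : q ∘ₗ δ' = LinearMap.id)
    (hδ'φ : δ' ∘ₗ LA.φ = LB'.φ ∘ₗ δ') :
    ∀ (a₁ a₂ : G), ∀ f₁ ∈ LA.grading a₁, ∀ f₂ ∈ LA.grading a₂, ∀ u : V,
      F (LB.br (δ f₁) (δ f₂) (i u)) = LB'.br (δ' f₁) (δ' f₂) (j u) :=
  equivalent_extensions_same_rep_general ρ LV LB LB' LA i p j q hj_deg hexact' habelian' F hF_br hFi
    hqF δ hδ δ' hδ'
end

section
/- Let (A,[·,·,·],ρ,φ) be a regular 3-Hom-ρ-Lie algebra and ω : ∧³A → A an even trilinear ρ-skew-symmetric map with |ω(f₁,f₂,f₃)| = |f₁|+|f₂|+|f₃|. For a scalar parameter t set [f,g,h]_t = [f,g,h] + t·ω(f,g,h). Then (A,[·,·,·]_t,ρ,φ) is a 3-Hom-ρ-Lie algebra for every t if and only if both of the following hold: (1) (A, ω, ρ, φ) is itself a 3-Hom-ρ-Lie algebra (i.e. ω satisfies the ρ-fundamental identity ω(φf₁,φf₂,ω(g₁,g₂,g₃)) = ω(ω(f₁,f₂,g₁),φg₂,φg₃)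 + ρ(f₁+f₂,g₁)ω(φg₁,ω(f₁,f₂,g₂),φg₃) + ρ(f₁+f₂,g₁+g₂)ω(φg₁,φg₂,ω(f₁,f₂,g₃))); and (2) ω is a 1-cocycle of A with coefficients in the adjoint representation, i.e. ω(φf₁,φf₂,[g₁,g₂,g₃]) + [φf₁,φf₂,ω(g₁,g₂,g₃)] = ω([f₁,f₂,g₁],φg₂,φg₃) + ρ(f₁+f₂,g₁)ω(φg₁,[f₁,f₂,g₂],φg₃) + ρ(f₁+f₂,g₁+g₂)ω(φg₁,φg₂,[f₁,f₂,g₃]) + [ω(f₁,f₂,g₁),φg₂,φg₃] + ρ(f₁+f₂,g₁)[φg₁,ω(f₁,f₂,g₂),φg₃] + ρ(f₁+f₂,g₁+g₂)[φg₁,φg₂,ω(f₁,f₂,g₃)] for all homogeneous elements. -/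
lemma aux_two_val {k A : Type*} [Field k] [Infinite k] [AddCommGroup A] [Module k A]
    (v w : A) (h : ∀ t : k, t • v + (t * t) • w = 0) : v = 0 ∧ w = 0 := by
  classical
  obtain ⟨t, ht⟩ := Infinite.exists_notMem_finset ({0, 1} : Finset k)
  simp only [Finset.mem_insert, Finset.mem_singleton, not_or] at ht
  obtain ⟨ht0, ht1⟩ := ht
  have h1 := h 1
  simp only [one_smul, one_mul] at h1
  have ht' := h t
  have h2 : v + t • w = 0 := by
    have := congrArg (fun x => t⁻¹ • x) ht'
    simp only [smul_add, smul_smul, smul_zero, inv_mul_cancel₀ ht0,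
      show t⁻¹ * (t * t) = t by field_simp, one_smul] at this
    exact this
  have hw : (t - 1) • w = 0 := by
    have := sub_eq_zero.mpr (h2.trans h1.symm)
    rw [add_sub_add_left_eq_sub] at this
    rw [sub_smul, one_smul]
    exact this
  have hw0 : w = 0 := (smul_eq_zero.mp hw).resolve_left (sub_ne_zero.mpr ht1)
  exact ⟨by simpa [hw0] using h1, hw0⟩


section DeformationPredicates

variable {k G A : Type*} [Field k] [AddCommGroup G] [AddCommGroup A] [Module k A]

/-- Degree-additivity of a trilinear bracket on homogeneous elements. -/
def DegLike (𝒜 : G → Submodule k A) (br : A →ₗ[k] A →ₗ[k] A →ₗ[k] A) : Prop :=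
  ∀ (a b c : G), ∀ f ∈ 𝒜 a, ∀ g ∈ 𝒜 b, ∀ h ∈ 𝒜 c, br f g h ∈ 𝒜 (a + b + c)

/-- `ρ`-skew-symmetry of a trilinear bracket in the first two arguments. -/
def Skew12Like (ρ : G → G → k) (𝒜 : G → Submodule k A)
    (br : A →ₗ[k] A →ₗ[k] A →ₗ[k] A) : Prop :=
  ∀ (a b : G), ∀ f ∈ 𝒜 a, ∀ g ∈ 𝒜 b, ∀ h : A, br f g h = (-(ρ a b)) • br g f h

/-- `ρ`-skew-symmetry of a trilinear bracket in the last two arguments. -/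
def Skew23Like (ρ : G → G → k) (𝒜 : G → Submodule k A)
    (br : A →ₗ[k] A →ₗ[k] A →ₗ[k] A) : Prop :=
  ∀ (b c : G), ∀ g ∈ 𝒜 b, ∀ h ∈ 𝒜 c, ∀ f : A, br f g h = (-(ρ b c)) • br f h g

/-- The `ρ`-fundamental identity for a trilinear bracket `br` with twisting map `φ`. -/
def FundLike (ρ : G → G → k) (𝒜 : G → Submodule k A)
    (br : A →ₗ[k] A →ₗ[k] A →ₗ[k] A) (φ : A →ₗ[k] A) : Prop :=
  ∀ (a₁ a₂ b₁ b₂ b₃ : G), ∀ f₁ ∈ 𝒜 a₁, ∀ f₂ ∈ 𝒜 a₂,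
    ∀ g₁ ∈ 𝒜 b₁, ∀ g₂ ∈ 𝒜 b₂, ∀ g₃ ∈ 𝒜 b₃,
    br (φ f₁) (φ f₂) (br g₁ g₂ g₃) =
      br (br f₁ f₂ g₁) (φ g₂) (φ g₃)
        + ρ (a₁ + a₂) b₁ • br (φ g₁) (br f₁ f₂ g₂) (φ g₃)
        + ρ (a₁ + a₂) (b₁ + b₂) • br (φ g₁) (φ g₂) (br f₁ f₂ g₃)

end DeformationPredicates

/-- For a regular `3`-Hom-`ρ`-Lie algebra `A` (over an infinite
field) and an even trilinear `ρ`-skew-symmetric map `ω`, the deformed brackets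
`[f,g,h]_t = [f,g,h] + t ω(f,g,h)` endow `A` with a `3`-Hom-`ρ`-Lie algebra
structure for every `t` iff `ω` itself satisfies the `ρ`-fundamental identity and
`ω` is a `1`-cocycle of `A` with coefficients in the adjoint representation. -/
theorem infinitesimal_deformation_iff {k G A : Type*} [Field k] [Infinite k]
    [AddCommGroup G] [DecidableEq G] [AddCommGroup A] [Module k A]
    (ρ : G → G → k)
    (hρ₁ : ∀ a b : G, ρ a b * ρ b a = 1)
    (hρ₂ : ∀ a b c : G, ρ (a + b) c = ρ a c * ρ b c)
    (L : ThreeHomRhoLie k G A ρ)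
    (hbij : Function.Bijective L.φ)
    (hmul : ∀ f g h : A, L.φ (L.br f g h) = L.br (L.φ f) (L.φ g) (L.φ h))
    (ω : A →ₗ[k] A →ₗ[k] A →ₗ[k] A)
    (hω_deg : DegLike L.grading ω)
    (hω_skew₁₂ : Skew12Like ρ L.grading ω)
    (hω_skew₂₃ : Skew23Like ρ L.grading ω) :
    (∀ t : k, DegLike L.grading (L.br + t • ω) ∧
        Skew12Like ρ L.grading (L.br + t • ω) ∧
        Skew23Like ρ L.grading (L.br + t • ω) ∧
        FundLike ρ L.grading (L.br + t • ω) L.φ) ↔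
      (FundLike ρ L.grading ω L.φ ∧
        (∀ (a₁ a₂ b₁ b₂ b₃ : G), ∀ f₁ ∈ L.grading a₁, ∀ f₂ ∈ L.grading a₂,
          ∀ g₁ ∈ L.grading b₁, ∀ g₂ ∈ L.grading b₂, ∀ g₃ ∈ L.grading b₃,
          ω (L.φ f₁) (L.φ f₂) (L.br g₁ g₂ g₃)
              + L.br (L.φ f₁) (L.φ f₂) (ω g₁ g₂ g₃) =
            ω (L.br f₁ f₂ g₁) (L.φ g₂) (L.φ g₃)
              + ρ (a₁ + a₂) b₁ • ω (L.φ g₁) (L.br f₁ f₂ g₂) (L.φ g₃)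
              + ρ (a₁ + a₂) (b₁ + b₂) • ω (L.φ g₁) (L.φ g₂) (L.br f₁ f₂ g₃)
              + L.br (ω f₁ f₂ g₁) (L.φ g₂) (L.φ g₃)
              + ρ (a₁ + a₂) b₁ • L.br (L.φ g₁) (ω f₁ f₂ g₂) (L.φ g₃)
              + ρ (a₁ + a₂) (b₁ + b₂) • L.br (L.φ g₁) (L.φ g₂) (ω f₁ f₂ g₃))) := by
  constructor
  · intro H
    have key : ∀ (a₁ a₂ b₁ b₂ b₃ : G), ∀ f₁ ∈ L.grading a₁, ∀ f₂ ∈ L.grading a₂,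
        ∀ g₁ ∈ L.grading b₁, ∀ g₂ ∈ L.grading b₂, ∀ g₃ ∈ L.grading b₃,
        ((ω (L.φ f₁) (L.φ f₂) (L.br g₁ g₂ g₃) + L.br (L.φ f₁) (L.φ f₂) (ω g₁ g₂ g₃))
          - (ω (L.br f₁ f₂ g₁) (L.φ g₂) (L.φ g₃)
              + ρ (a₁ + a₂) b₁ • ω (L.φ g₁) (L.br f₁ f₂ g₂) (L.φ g₃)
              + ρ (a₁ + a₂) (b₁ + b₂) • ω (L.φ g₁) (L.φ g₂) (L.br f₁ f₂ g₃)
              + L.br (ω f₁ f₂ g₁) (L.φ g₂) (L.φ g₃)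
              + ρ (a₁ + a₂) b₁ • L.br (L.φ g₁) (ω f₁ f₂ g₂) (L.φ g₃)
              + ρ (a₁ + a₂) (b₁ + b₂) • L.br (L.φ g₁) (L.φ g₂) (ω f₁ f₂ g₃)) = 0)
        ∧ (ω (L.φ f₁) (L.φ f₂) (ω g₁ g₂ g₃)
          - (ω (ω f₁ f₂ g₁) (L.φ g₂) (L.φ g₃)
              + ρ (a₁ + a₂) b₁ • ω (L.φ g₁) (ω f₁ f₂ g₂) (L.φ g₃)
              + ρ (a₁ + a₂) (b₁ + b₂) • ω (L.φ g₁) (L.φ g₂) (ω f₁ f₂ g₃)) = 0) := by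
      intro a₁ a₂ b₁ b₂ b₃ f₁ hf₁ f₂ hf₂ g₁ hg₁ g₂ hg₂ g₃ hg₃
      have h0 := L.fund a₁ a₂ b₁ b₂ b₃ f₁ hf₁ f₂ hf₂ g₁ hg₁ g₂ hg₂ g₃ hg₃
      refine aux_two_val (k := k) _ _ (fun t => ?_)
      have ht := (H t).2.2.2 a₁ a₂ b₁ b₂ b₃ f₁ hf₁ f₂ hf₂ g₁ hg₁ g₂ hg₂ g₃ hg₃
      simp only [LinearMap.add_apply, LinearMap.smul_apply, map_add, map_smul] at ht
      linear_combination (norm := module) ht - h0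
    constructor
    · intro a₁ a₂ b₁ b₂ b₃ f₁ hf₁ f₂ hf₂ g₁ hg₁ g₂ hg₂ g₃ hg₃
      have hX := (key a₁ a₂ b₁ b₂ b₃ f₁ hf₁ f₂ hf₂ g₁ hg₁ g₂ hg₂ g₃ hg₃).2
      linear_combination (norm := module) hX
    · intro a₁ a₂ b₁ b₂ b₃ f₁ hf₁ f₂ hf₂ g₁ hg₁ g₂ hg₂ g₃ hg₃
      have hY := (key a₁ a₂ b₁ b₂ b₃ f₁ hf₁ f₂ hf₂ g₁ hg₁ g₂ hg₂ g₃ hg₃).1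
      linear_combination (norm := module) hY
  · rintro ⟨hXall, hYall⟩ t
    refine ⟨?_, ?_, ?_, ?_⟩
    · intro a b c f hf g hg h hh
      simp only [LinearMap.add_apply, LinearMap.smul_apply]
      exact Submodule.add_mem _ (L.br_deg a b c f hf g hg h hh)
        (Submodule.smul_mem _ _ (hω_deg a b c f hf g hg h hh))
    · intro a b f hf g hg h
      have h1 := L.skew₁₂ a b f hf g hg h
      have h2 := hω_skew₁₂ a b f hf g hg h
      simp only [LinearMap.add_apply, LinearMap.smul_apply]
      linear_combination (norm := module) h1 + t • h2
    · intro b c g hg h hh f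
      have h1 := L.skew₂₃ b c g hg h hh f
      have h2 := hω_skew₂₃ b c g hg h hh f
      simp only [LinearMap.add_apply, LinearMap.smul_apply]
      linear_combination (norm := module) h1 + t • h2
    · intro a₁ a₂ b₁ b₂ b₃ f₁ hf₁ f₂ hf₂ g₁ hg₁ g₂ hg₂ g₃ hg₃
      have h0 := L.fund a₁ a₂ b₁ b₂ b₃ f₁ hf₁ f₂ hf₂ g₁ hg₁ g₂ hg₂ g₃ hg₃
      have hX := hXall a₁ a₂ b₁ b₂ b₃ f₁ hf₁ f₂ hf₂ g₁ hg₁ g₂ hg₂ g₃ hg₃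
      have hY := hYall a₁ a₂ b₁ b₂ b₃ f₁ hf₁ f₂ hf₂ g₁ hg₁ g₂ hg₂ g₃ hg₃
      simp only [LinearMap.add_apply, LinearMap.smul_apply, map_add, map_smul]
      linear_combination (norm := module) h0 + t • hY + (t * t) • hX
end
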